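/- arXiv:1612.02148 — 7 statements merged into one kernel-verified Lean document; each statement's English description precedes it below -/
import Mathlib

section
/- Let γ ∈ (0,1), θ = log(1/γ), and (Q_n)_{n≥1} iid nonnegative random variables such that liminf_{t→∞} t·P(log Q₁ > t) > θ. Then for every t ≥ 0, Σ_{n≥1} P(Σ_{k=1}^n γ^{k-1} Q_k ≤ e^t) < ∞. -/
open MeasureTheory ProbabilityTheory Filter

/-! Since all terms are nonnegative, `∑ γ^(k-1) Q_k ≤ e^t` forces `Q_k ≤ e^(t + (k-1)θ)` for every
`k`, so by independence the probability is at most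
`∏ₖ P(Q ≤ e^(t + (k-1)θ)) ≤ exp (-∑ₖ P(log Q > t + (k-1)θ))`. The tail hypothesis gives
`P(log Q > x) ≥ c / x` for large `x` with some `c > θ`, and `∑ₖ c / (a + kθ)` grows like
`(c/θ) log n`; hence the `n`-th probability is `O(n^(-c/θ))`, which is summable as `c/θ > 1`. -/

open Finset Real

lemma Real.log_add_nat_mul_sub_log_le_sum {a h : ℝ} (ha : 0 < a) (hh : 0 ≤ h) (n : ℕ) :
    log (a + n * h) - log a ≤ ∑ j ∈ range n, h / (a + j * h) := by
  induction n with
  | zero => simp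
  | succ n ih =>
    have hx : 0 < a + n * h := by positivity
    have step : log (a + (n + 1 : ℕ) * h) - log (a + n * h) ≤ h / (a + n * h) := by
      rw [← log_div (by positivity) hx.ne']
      calc log ((a + (n + 1 : ℕ) * h) / (a + n * h)) ≤ (a + (n + 1 : ℕ) * h) / (a + n * h) - 1 :=
            log_le_sub_one_of_pos (by positivity)
        _ = h / (a + n * h) := by field_simp; push_cast; ring
    rw [sum_range_succ]
    linarith

lemma prod_le_div_rpow_of_le_exp_neg_div {ρ : ℕ → ℝ} {a h c : ℝ} (ha : 0 < a) (hh : 0 < h)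
    (hc : 0 ≤ c) (hρ0 : ∀ j, 0 ≤ ρ j) (hρ : ∀ j, ρ j ≤ exp (-(c / (a + j * h)))) (n : ℕ) :
    ∏ j ∈ range n, ρ j ≤ (a / (a + n * h)) ^ (c / h) := by
  calc ∏ j ∈ range n, ρ j ≤ ∏ j ∈ range n, exp (-(c / (a + j * h))) :=
        prod_le_prod (fun j _ => hρ0 j) fun j _ => hρ j
    _ = exp (-(c / h * ∑ j ∈ range n, h / (a + j * h))) := by
        rw [← exp_sum, mul_sum, ← sum_neg_distrib]
        refine congrArg exp (sum_congr rfl fun j _ => ?_)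
        field_simp
    _ ≤ exp (-(c / h * (log (a + n * h) - log a))) := by
        gcongr
        exact log_add_nat_mul_sub_log_le_sum ha hh.le n
    _ = (a / (a + n * h)) ^ (c / h) := by
        rw [rpow_def_of_pos (by positivity), log_div ha.ne' (by positivity)]
        ring_nf

lemma summable_div_add_nat_mul_rpow {a h p : ℝ} (ha : 0 ≤ a) (hh : 0 < h) (hp : 1 < p) :
    Summable fun n : ℕ => (a / (a + n * h)) ^ p := by
  refine (((summable_one_div_nat_add_rpow (a / h) p).2 hp).mul_left ((a / h) ^ p)).congr
    fun n => ?_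
  rw [abs_of_nonneg (by positivity), mul_one_div, ← div_rpow (by positivity) (by positivity)]
  congr 1
  field_simp
  ring

section Independence

variable {Ω ι : Type*} {Q : ι → Ω → ℝ} {w : ι → ℝ} {s t : Finset ι}

lemma setOf_sum_mul_le_subset_biInter (hQ0 : ∀ i ω, 0 ≤ Q i ω) (hw : ∀ i, 0 < w i)
    (hts : t ⊆ s) (b : ℝ) :
    {ω | ∑ i ∈ s, w i * Q i ω ≤ b} ⊆ ⋂ i ∈ t, {ω | Q i ω ≤ b / w i} := by
  intro ω hω
  simp only [Set.mem_iInter, Set.mem_ofPred_eq]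
  intro i hi
  rw [le_div_iff₀' (hw i)]
  exact (single_le_sum (fun j _ => mul_nonneg (hw j).le (hQ0 j ω)) (hts hi)).trans hω

variable [MeasurableSpace Ω] {μ : Measure Ω}

lemma measureReal_sum_mul_le_le_prod [IsFiniteMeasure μ] (hindep : iIndepFun Q μ)
    (hQ0 : ∀ i ω, 0 ≤ Q i ω) (hw : ∀ i, 0 < w i) (hts : t ⊆ s) (b : ℝ) :
    μ.real {ω | ∑ i ∈ s, w i * Q i ω ≤ b} ≤ ∏ i ∈ t, μ.real {ω | Q i ω ≤ b / w i} := by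
  have hmeas : ∀ i ∈ t,
      MeasurableSet[MeasurableSpace.comap (Q i) inferInstance] {ω | Q i ω ≤ b / w i} :=
    fun i _ => ⟨Set.Iic (b / w i), measurableSet_Iic, rfl⟩
  calc μ.real {ω | ∑ i ∈ s, w i * Q i ω ≤ b}
      ≤ μ.real (⋂ i ∈ t, {ω | Q i ω ≤ b / w i}) :=
        measureReal_mono (setOf_sum_mul_le_subset_biInter hQ0 hw hts b)
    _ = ∏ i ∈ t, μ.real {ω | Q i ω ≤ b / w i} := by
        rw [measureReal_def, hindep.meas_biInter hmeas, ENNReal.toReal_prod]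
        rfl

end Independence

section Tail

variable {Ω : Type*} [MeasurableSpace Ω] {μ : Measure Ω} {X : Ω → ℝ}

lemma exists_gt_eventually_div_le_measureReal [IsFiniteMeasure μ] {θ : ℝ} (hθ : 0 ≤ θ)
    (h : ENNReal.ofReal θ < liminf (fun x : ℝ => ENNReal.ofReal x * μ {ω | x < X ω}) atTop) :
    ∃ c > θ, ∀ᶠ x in atTop, c / x ≤ μ.real {ω | x < X ω} := by
  obtain ⟨r, hθr, hr⟩ := exists_between h
  have hr_top : r ≠ ⊤ := (hr.trans_le le_top).ne
  refine ⟨r.toReal, (ENNReal.ofReal_lt_iff_lt_toReal hθ hr_top).1 hθr, ?_⟩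
  filter_upwards [eventually_lt_of_lt_liminf hr, eventually_gt_atTop 0] with x hx hx0
  rw [← ENNReal.ofReal_toReal hr_top, ← ofReal_measureReal, ← ENNReal.ofReal_mul hx0.le,
    ENNReal.ofReal_lt_ofReal_iff'] at hx
  rw [div_le_iff₀' hx0]
  exact hx.1.le

lemma measureReal_le_exp_le_exp_neg [IsProbabilityMeasure μ] (hX : Measurable X)
    (hX0 : ∀ ω, 0 ≤ X ω) {x : ℝ} (hx : 0 ≤ x) :
    μ.real {ω | X ω ≤ exp x} ≤ exp (-μ.real {ω | x < log (X ω)}) := by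
  have hsub : {ω | X ω ≤ exp x} ⊆ {ω | x < log (X ω)}ᶜ := by
    intro ω hω
    simp only [Set.mem_compl_iff, Set.mem_ofPred_eq, not_lt]
    rcases (hX0 ω).eq_or_lt with h0 | h0
    · rw [← h0, log_zero]
      exact hx
    · exact (log_le_log h0 hω).trans (log_exp x).le
  calc μ.real {ω | X ω ≤ exp x} ≤ μ.real {ω | x < log (X ω)}ᶜ := measureReal_mono hsub
    _ = 1 - μ.real {ω | x < log (X ω)} :=
        probReal_compl_eq_one_sub (measurableSet_lt measurable_const hX.log)
    _ ≤ exp (-μ.real {ω | x < log (X ω)}) := one_sub_le_exp_neg _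

end Tail

lemma measureReal_perpetuity_le_prod {Ω : Type*} [MeasurableSpace Ω] {μ : Measure Ω}
    [IsProbabilityMeasure μ] {Q : ℕ → Ω → ℝ} (hQ0 : ∀ n ω, 0 ≤ Q n ω)
    (hindep : iIndepFun Q μ) (hident : ∀ n, IdentDistrib (Q n) (Q 1) μ μ) (θ t : ℝ) (M N : ℕ) :
    μ.real {ω | ∑ k ∈ Icc 1 (N + M + 1), exp (-θ) ^ (k - 1) * Q k ω ≤ exp t}
      ≤ ∏ j ∈ range (N + 1), μ.real {ω | Q 1 ω ≤ exp (t + M * θ + j * θ)} := by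
  calc μ.real {ω | ∑ k ∈ Icc 1 (N + M + 1), exp (-θ) ^ (k - 1) * Q k ω ≤ exp t}
      ≤ ∏ k ∈ Ico (M + 1) (N + M + 2), μ.real {ω | Q k ω ≤ exp t / exp (-θ) ^ (k - 1)} :=
        measureReal_sum_mul_le_le_prod hindep hQ0 (fun k => pow_pos (exp_pos _) _)
          (fun k hk => by simp only [mem_Ico, mem_Icc] at hk ⊢; omega) _
    _ = ∏ j ∈ range (N + 1), μ.real {ω | Q 1 ω ≤ exp (t + M * θ + j * θ)} := by
        rw [prod_Ico_eq_prod_range, show N + M + 2 - (M + 1) = N + 1 by omega]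
        refine prod_congr rfl fun j _ => ?_
        have hlevel : exp t / exp (-θ) ^ (M + 1 + j - 1) = exp (t + M * θ + j * θ) := by
          rw [← exp_nat_mul, ← exp_sub, show M + 1 + j - 1 = M + j by omega]
          push_cast
          ring_nf
        rw [hlevel]
        exact congrArg ENNReal.toReal ((hident _).measure_mem_eq measurableSet_Iic)

theorem stmt_6 {Ω : Type*} [MeasureSpace Ω] [IsProbabilityMeasure (ℙ : Measure Ω)]
    (γ θ : ℝ) (hγ : γ ∈ Set.Ioo (0 : ℝ) 1) (hθ : θ = Real.log (1 / γ))
    (Q : ℕ → Ω → ℝ) (hQmeas : ∀ n, Measurable (Q n)) (hQ0 : ∀ n ω, 0 ≤ Q n ω)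
    (hindep : iIndepFun Q ℙ)
    (hident : ∀ n, IdentDistrib (Q n) (Q 1) ℙ ℙ)
    (htail : Filter.liminf
        (fun t : ℝ => ENNReal.ofReal t * ℙ {ω | t < Real.log (Q 1 ω)}) atTop
      > ENNReal.ofReal θ) :
    ∀ t : ℝ, 0 ≤ t →
      (∑' n : ℕ,
        ℙ {ω | ∑ k ∈ Finset.Icc 1 (n + 1), γ ^ (k - 1) * Q k ω ≤ Real.exp t}) < ⊤ := by
  intro t _
  obtain ⟨hγ0, hγ1⟩ := hγ
  have hθpos : 0 < θ := hθ ▸ log_pos (one_lt_one_div hγ0 hγ1)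
  obtain rfl : γ = exp (-θ) := by rw [hθ, one_div, log_inv, neg_neg, exp_log hγ0]
  obtain ⟨c, hcθ, hc⟩ := exists_gt_eventually_div_le_measureReal hθpos.le htail
  have hcdf : ∀ᶠ x in atTop, (ℙ).real {ω | Q 1 ω ≤ exp x} ≤ exp (-(c / x)) := by
    filter_upwards [hc, eventually_ge_atTop 0] with x hcx hx
    exact (measureReal_le_exp_le_exp_neg (hQmeas 1) (hQ0 1) hx).trans (by gcongr)
  obtain ⟨s₀, hs₀⟩ := eventually_atTop.1 hcdf
  obtain ⟨M, hM⟩ := exists_nat_ge (max s₀ 1 / θ)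
  have ha : max s₀ 1 ≤ t + M * θ := by
    linarith [(div_le_iff₀ hθpos).1 hM]
  have hbound : ∀ N : ℕ,
      (ℙ).real {ω | ∑ k ∈ Icc 1 (N + M + 1), exp (-θ) ^ (k - 1) * Q k ω ≤ exp t}
        ≤ ((t + M * θ) / (t + M * θ + (N + 1 : ℕ) * θ)) ^ (c / θ) := fun N =>
    (measureReal_perpetuity_le_prod hQ0 hindep hident θ t M N).trans <|
      prod_le_div_rpow_of_le_exp_neg_div (by linarith [le_max_right s₀ 1]) hθpos
        (by linarith) (fun _ => measureReal_nonneg)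
        (fun j => hs₀ _ (le_add_of_le_of_nonneg ((le_max_left s₀ 1).trans ha) (by positivity)))
        (N + 1)
  have hsummable : Summable fun n : ℕ =>
      (ℙ).real {ω | ∑ k ∈ Icc 1 (n + 1), exp (-θ) ^ (k - 1) * Q k ω ≤ exp t} :=
    (summable_nat_add_iff M).1 <| ((summable_nat_add_iff 1).2 <|
      summable_div_add_nat_mul_rpow (by linarith [le_max_right s₀ 1]) hθpos
        ((one_lt_div hθpos).2 hcθ)).of_nonneg_of_le (fun _ => measureReal_nonneg) hbound
  simpa only [ofReal_measureReal (measure_ne_top _ _)] using hsummable.tsum_ofReal_lt_top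
end

section
/- Let θ > 0 and (Q_n)_{n≥1} iid nonnegative random variables with δ := P(Q₁ = 0) > 0 and sup_{t≥1} t·P(log Q₁ > t) ≤ (1-ε)θ for some ε ∈ (0,1) with δ ≥ e^{-εθ}. Then Σ_{n≥1} P(max_{1≤k≤n} e^{-(k-1)θ} Q_k ≤ 1/n) = ∞. -/
open MeasureTheory ProbabilityTheory Filter Real

/-!
Write `N = n + 1`, `L = log N` and `s_k = (k - 1) θ - L`. By independence the probability is
`∏_{k ≤ N} P(Q ≤ exp s_k)`. While `s_k ≤ 1 + θ` (about `L / θ` indices) a factor is at least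
`δ ≥ exp (-ε θ)`, which costs `exp (-ε L)` up to a constant. Beyond that the tail bound gives the
factor `1 - (1 - ε) θ / s_k`, and since `θ / s ≤ log s - log (s - θ)` telescopes along
`s_k`, these factors cost `exp (-(1 - ε) L)` up to a constant. So the probability is at least
`C / N`, and the harmonic series diverges.
-/

/-- `exp (-costExponent θ ε s)` bounds `P(Q ≤ exp s)` from below: through the atom at `0` when
`s ≤ 1 + θ`, through the tail bound `P(log Q > s) ≤ (1 - ε) θ / s` otherwise. -/
noncomputable def costExponent (θ ε s : ℝ) : ℝ :=
  if s ≤ 1 + θ then ε * θ else log s - log (s - (1 - ε) * θ)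

/-- Its increments along `s ↦ s + θ` dominate `costExponent`: the first term pays for the atom
factors, the second for the first-order part of the tail factors, the third for their
second-order error. -/
noncomputable def costPotential (θ ε s : ℝ) : ℝ :=
  ε * min s (1 + 2 * θ) + (1 - ε) * log (max (s - θ) 1) - (1 - ε) ^ 2 * θ / max (s - θ) 1

lemma log_sub_log_sub_mul_le {θ s c : ℝ} (hθ : 0 < θ) (hs : θ < s) (hc0 : 0 ≤ c) (hc1 : c ≤ 1) :
    log s - log (s - c * θ) ≤
      c * (log s - log (s - θ)) + c ^ 2 * θ / (s - θ) - c ^ 2 * θ / s := by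
  have hsθ : 0 < s - θ := by linarith
  have hscθ : s - θ ≤ s - c * θ := by nlinarith
  have hs0 : 0 < s := by linarith
  have hscθ0 : 0 < s - c * θ := hsθ.trans_le hscθ
  have hupper : log s - log (s - c * θ) ≤ c * θ / (s - c * θ) := by
    have := log_le_sub_one_of_pos (div_pos hs0 hscθ0)
    rw [log_div hs0.ne' hscθ0.ne'] at this
    convert this using 1
    field_simp
    ring
  have hlower : θ / s ≤ log s - log (s - θ) := by
    have := one_sub_inv_le_log_of_pos (div_pos hs0 hsθ)
    rw [log_div hs0.ne' hsθ.ne', inv_div] at this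
    convert this using 1
    field_simp
    ring
  have hquad : c * θ / (s - c * θ) - c * (θ / s) ≤ c ^ 2 * θ / (s - θ) - c ^ 2 * θ / s := by
    have hl : c * θ / (s - c * θ) - c * (θ / s) = c ^ 2 * θ ^ 2 / (s * (s - c * θ)) := by
      field_simp
      ring
    have hr : c ^ 2 * θ / (s - θ) - c ^ 2 * θ / s = c ^ 2 * θ ^ 2 / (s * (s - θ)) := by
      field_simp
      ring
    rw [hl, hr]
    exact div_le_div_of_nonneg_left (by positivity) (by positivity)
      (mul_le_mul_of_nonneg_left hscθ hs0.le)
  nlinarith [mul_le_mul_of_nonneg_left hlower hc0]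

lemma costExponent_le_costPotential_sub {θ ε : ℝ} (hθ : 0 < θ) (hε0 : 0 ≤ ε) (hε1 : ε ≤ 1)
    (s : ℝ) : costExponent θ ε s ≤ costPotential θ ε (s + θ) - costPotential θ ε s := by
  have hmin : min s (1 + 2 * θ) ≤ min (s + θ) (1 + 2 * θ) := min_le_min_right _ (by linarith)
  have hmax : max (s - θ) 1 ≤ max s 1 := max_le_max_right _ (by linarith)
  have hlog : log (max (s - θ) 1) ≤ log (max s 1) :=
    log_le_log (by positivity) hmax
  have hinv : (1 - ε) ^ 2 * θ / max s 1 ≤ (1 - ε) ^ 2 * θ / max (s - θ) 1 :=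
    div_le_div_of_nonneg_left (by positivity) (by positivity) hmax
  unfold costExponent costPotential
  rw [add_sub_cancel_right]
  split_ifs with hs
  · have : min (s + θ) (1 + 2 * θ) = min s (1 + 2 * θ) + θ := by
      rw [min_eq_left (by linarith), min_eq_left (by linarith)]
    nlinarith [mul_le_mul_of_nonneg_left hlog (sub_nonneg.2 hε1)]
  · rw [not_le] at hs
    rw [max_eq_left (by linarith), max_eq_left (by linarith)]
    nlinarith [log_sub_log_sub_mul_le hθ (by linarith : θ < s) (sub_nonneg.2 hε1)
      (by linarith : 1 - ε ≤ 1), mul_le_mul_of_nonneg_left hmin hε0]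

lemma sum_costExponent_le {θ ε : ℝ} (hθ : 0 < θ) (hε0 : 0 ≤ ε) (hε1 : ε ≤ 1) (n : ℕ) :
    ∑ i ∈ Finset.range (n + 1), costExponent θ ε (i * θ - log (n + 1)) ≤
      log (n + 1) + (ε * (1 + 2 * θ) + (1 - ε) * log (1 + θ) + (1 - ε) ^ 2 * θ) := by
  set L := log ((n : ℝ) + 1)
  have hL : 0 ≤ L := log_nonneg (by linarith [n.cast_nonneg (α := ℝ)])
  have htelescope : ∑ i ∈ Finset.range (n + 1), costExponent θ ε (i * θ - L) ≤
      costPotential θ ε ((n + 1 : ℕ) * θ - L) - costPotential θ ε ((0 : ℕ) * θ - L) := by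
    rw [← Finset.sum_range_sub (fun i : ℕ => costPotential θ ε (i * θ - L))]
    refine Finset.sum_le_sum fun i _ => ?_
    rw [show ((i + 1 : ℕ) : ℝ) * θ - L = i * θ - L + θ by push_cast; ring]
    exact costExponent_le_costPotential_sub hθ hε0 hε1 (i * θ - L)
  have hstart : costPotential θ ε ((0 : ℕ) * θ - L) = -(ε * L) - (1 - ε) ^ 2 * θ := by
    simp only [costPotential, Nat.cast_zero, zero_mul, zero_sub]
    rw [min_eq_left (by linarith), max_eq_right (by linarith), log_one]
    ring
  have hend : costPotential θ ε ((n + 1 : ℕ) * θ - L) ≤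
      ε * (1 + 2 * θ) + (1 - ε) * (L + log (1 + θ)) := by
    have hmax : max ((n + 1 : ℕ) * θ - L - θ) 1 ≤ (n + 1) * (1 + θ) := by
      push_cast
      exact max_le (by nlinarith [n.cast_nonneg (α := ℝ)]) (by nlinarith [n.cast_nonneg (α := ℝ)])
    have hlog : log (max ((n + 1 : ℕ) * θ - L - θ) 1) ≤ L + log (1 + θ) := by
      rw [← log_mul (by positivity) (by positivity)]
      exact log_le_log (by positivity) hmax
    unfold costPotential
    nlinarith [min_le_right ((n + 1 : ℕ) * θ - L) (1 + 2 * θ),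
      mul_le_mul_of_nonneg_left hlog (sub_nonneg.2 hε1),
      (by positivity : 0 ≤ (1 - ε) ^ 2 * θ / max ((n + 1 : ℕ) * θ - L - θ) 1)]
  linarith

lemma ofReal_exp_neg_costExponent_le_measure {Ω : Type*} [MeasurableSpace Ω] {μ : Measure Ω}
    [IsProbabilityMeasure μ] {X : Ω → ℝ} {θ ε : ℝ} (hθ : 0 < θ) (hε0 : 0 ≤ ε)
    (hδ : ENNReal.ofReal (exp (-(ε * θ))) ≤ μ {ω | X ω = 0})
    (htail : ∀ t : ℝ, 1 ≤ t → t * (μ {ω | t < log (X ω)}).toReal ≤ (1 - ε) * θ) (s : ℝ) :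
    ENNReal.ofReal (exp (-costExponent θ ε s)) ≤ μ (X ⁻¹' Set.Iic (exp s)) := by
  unfold costExponent
  split_ifs with hs
  · refine hδ.trans (measure_mono fun ω (hω : X ω = 0) => ?_)
    simp only [Set.mem_preimage, Set.mem_Iic, hω, (exp_pos s).le]
  rw [not_le] at hs
  set A := {ω | s < log (X ω)}
  have hs0 : 0 < s := by linarith
  have hA : (μ A).toReal ≤ (1 - ε) * θ / s := by
    rw [le_div_iff₀ hs0, mul_comm]
    exact htail s (by linarith)
  have hexp : exp (-(log s - log (s - (1 - ε) * θ))) = 1 - (1 - ε) * θ / s := by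
    rw [neg_sub, exp_sub, exp_log (by nlinarith), exp_log hs0]
    field_simp
  calc ENNReal.ofReal (exp (-(log s - log (s - (1 - ε) * θ))))
      ≤ ENNReal.ofReal (1 - (μ A).toReal) := ENNReal.ofReal_le_ofReal (by linarith)
    _ = 1 - μ A := by
      rw [ENNReal.ofReal_sub _ ENNReal.toReal_nonneg, ENNReal.ofReal_one,
        ENNReal.ofReal_toReal (measure_ne_top μ A)]
    _ ≤ μ Aᶜ := by
      rw [tsub_le_iff_left, ← measure_univ (μ := μ)]
      exact measure_univ_le_add_compl A
    _ ≤ μ (X ⁻¹' Set.Iic (exp s)) := measure_mono fun ω hω => le_exp_of_log_le (not_lt.1 hω)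

lemma exp_neg_mul_le_one_div_iff {a q N : ℝ} (hN : 0 < N) :
    exp (-a) * q ≤ 1 / N ↔ q ≤ exp (a - log N) := by
  rw [exp_sub, exp_log hN, exp_neg, inv_mul_le_iff₀ (exp_pos a), mul_one_div]

lemma exists_pos_ofReal_div_le_measure {Ω : Type*} [MeasurableSpace Ω] {μ : Measure Ω}
    [IsProbabilityMeasure μ] {θ ε : ℝ} (hθ : 0 < θ) (hε0 : 0 ≤ ε) (hε1 : ε ≤ 1)
    {Q : ℕ → Ω → ℝ} (hindep : iIndepFun Q μ) (hident : ∀ n, IdentDistrib (Q n) (Q 1) μ μ)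
    (hδ : ENNReal.ofReal (exp (-(ε * θ))) ≤ μ {ω | Q 1 ω = 0})
    (htail : ∀ t : ℝ, 1 ≤ t → t * (μ {ω | t < log (Q 1 ω)}).toReal ≤ (1 - ε) * θ) :
    ∃ C > 0, ∀ n : ℕ, ENNReal.ofReal (C / (n + 1)) ≤
      μ {ω | ∀ k ∈ Finset.Icc 1 (n + 1), exp (-((k : ℝ) - 1) * θ) * Q k ω ≤ 1 / (n + 1 : ℝ)} := by
  refine ⟨exp (-(ε * (1 + 2 * θ) + (1 - ε) * log (1 + θ) + (1 - ε) ^ 2 * θ)), exp_pos _,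
    fun n => ?_⟩
  have hN : (0 : ℝ) < n + 1 := by positivity
  set L := log ((n : ℝ) + 1)
  have hset : {ω | ∀ k ∈ Finset.Icc 1 (n + 1), exp (-((k : ℝ) - 1) * θ) * Q k ω ≤ 1 / (n + 1 : ℝ)}
      = ⋂ k ∈ Finset.Icc 1 (n + 1), Q k ⁻¹' Set.Iic (exp (((k : ℝ) - 1) * θ - L)) := by
    ext ω
    simp only [Set.mem_ofPred_eq, Set.mem_iInter, Set.mem_preimage, Set.mem_Iic, neg_mul,
      exp_neg_mul_le_one_div_iff hN, L]
  rw [hset, hindep.meas_biInter fun k _ => ⟨_, measurableSet_Iic, rfl⟩,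
    ← Finset.Ico_add_one_right_eq_Icc, Finset.prod_Ico_eq_prod_range]
  calc ENNReal.ofReal (exp (-(ε * (1 + 2 * θ) + (1 - ε) * log (1 + θ) + (1 - ε) ^ 2 * θ)) / (n + 1))
      ≤ ENNReal.ofReal (exp (-∑ i ∈ Finset.range (n + 1), costExponent θ ε (i * θ - L))) := by
        refine ENNReal.ofReal_le_ofReal ?_
        rw [div_eq_mul_inv, ← exp_log hN, ← exp_neg, ← exp_add]
        exact exp_le_exp.2 (by linarith [sum_costExponent_le hθ hε0 hε1 n])
    _ = ∏ i ∈ Finset.range (n + 1), ENNReal.ofReal (exp (-costExponent θ ε (i * θ - L))) := by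
        rw [← Finset.sum_neg_distrib, exp_sum,
          ENNReal.ofReal_prod_of_nonneg fun i _ => (exp_pos _).le]
    _ ≤ _ := by
        simp only [add_tsub_cancel_right]
        refine Finset.prod_le_prod' fun i _ => ?_
        rw [(hident _).measure_mem_eq measurableSet_Iic, add_comm 1 i, Nat.cast_add,
          Nat.cast_one, add_sub_cancel_right]
        exact ofReal_exp_neg_costExponent_le_measure hθ hε0 hδ htail _

lemma tsum_ofReal_div_succ_eq_top {C : ℝ} (hC : 0 < C) :
    ∑' n : ℕ, ENNReal.ofReal (C / (n + 1)) = ⊤ := by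
  by_contra h
  have hsum : Summable fun n : ℕ => C / (n + 1) := by
    simpa [ENNReal.toReal_ofReal (div_pos hC (Nat.cast_add_one_pos _)).le]
      using ENNReal.summable_toReal h
  refine Real.not_summable_natCast_inv ((summable_nat_add_iff 1).mp ?_)
  refine (hsum.div_const C).congr fun n => ?_
  push_cast
  field_simp

theorem stmt_7_general {Ω : Type*} [MeasureSpace Ω] [IsProbabilityMeasure (ℙ : Measure Ω)]
    (θ ε : ℝ) (hθ : 0 < θ) (hε : ε ∈ Set.Ioo (0 : ℝ) 1)
    (Q : ℕ → Ω → ℝ)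
    (hindep : iIndepFun Q ℙ)
    (hident : ∀ n, IdentDistrib (Q n) (Q 1) ℙ ℙ)
    (hδ : ENNReal.ofReal (Real.exp (-(ε * θ))) ≤ ℙ {ω | Q 1 ω = 0})
    (htail : ∀ t : ℝ, 1 ≤ t →
      t * (ℙ {ω | t < Real.log (Q 1 ω)}).toReal ≤ (1 - ε) * θ) :
    (∑' n : ℕ,
      ℙ {ω | ∀ k ∈ Finset.Icc 1 (n + 1),
        Real.exp (-((k : ℝ) - 1) * θ) * Q k ω ≤ 1 / (n + 1 : ℝ)}) = ⊤ := by
  obtain ⟨C, hC, hbound⟩ := exists_pos_ofReal_div_le_measure hθ hε.1.le hε.2.le hindep hident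
    hδ htail
  exact top_unique ((tsum_ofReal_div_succ_eq_top hC).ge.trans (ENNReal.tsum_le_tsum hbound))

theorem stmt_7 {Ω : Type*} [MeasureSpace Ω] [IsProbabilityMeasure (ℙ : Measure Ω)]
    (θ ε : ℝ) (hθ : 0 < θ) (hε : ε ∈ Set.Ioo (0 : ℝ) 1)
    (Q : ℕ → Ω → ℝ) (hQmeas : ∀ n, Measurable (Q n)) (hQ0 : ∀ n ω, 0 ≤ Q n ω)
    (hindep : iIndepFun Q ℙ)
    (hident : ∀ n, IdentDistrib (Q n) (Q 1) ℙ ℙ)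
    (hatom : 0 < ℙ {ω | Q 1 ω = 0})
    (hδ : ENNReal.ofReal (Real.exp (-(ε * θ))) ≤ ℙ {ω | Q 1 ω = 0})
    (htail : ∀ t : ℝ, 1 ≤ t →
      t * (ℙ {ω | t < Real.log (Q 1 ω)}).toReal ≤ (1 - ε) * θ) :
    (∑' n : ℕ,
      ℙ {ω | ∀ k ∈ Finset.Icc 1 (n + 1),
        Real.exp (-((k : ℝ) - 1) * θ) * Q k ω ≤ 1 / (n + 1 : ℝ)}) = ⊤ :=
  stmt_7_general θ ε hθ hε Q hindep hident hδ htail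
end

section
/- Let (M_k, Q_k)_{k≥1} be iid pairs of nonnegative random variables with P(M=0)=0, let c ≥ 0, γ = e^{-c}, S_n = Σ_{k=1}^n log M_k, and suppose σ := inf{n ≥ 1 : S_n + cn < 0} is a.s. finite. Let (σ_n)_{n≥0} be the corresponding ladder epochs (σ_0 = 0, σ_n the n-th strict descending ladder epoch of (S_n + cn)). Define X_n = M_n X_{n-1} + Q_n and X_n(γ) = γ X_{n-1}(γ) + Q_n with X_0 = X_0(γ) ≥ 0. Then X_{σ_n} ≤ X_{σ_n}(γ) a.s. for all n ≥ 0. -/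
/-!
Unrolling `x m = a m * x (m - 1) + q m` from `j` to `m` writes `x m` as a nonnegative combination of
`x j` and the `q i` with coefficients `∏ k ∈ Ioc i m, a k`. Between consecutive descending ladder
epochs `j < m` of `S n + c n` we have `S m + c m ≤ S i + c i` for `j ≤ i ≤ m`, so these coefficients
are at most `exp (S m - S i) ≤ γ ^ (m - i)`, the coefficients of the recursion with constant factor
`γ`. Induction over the ladder epochs finishes the proof.
-/

open MeasureTheory ProbabilityTheory Filter Finset

section AffineRecursion

variable {a b q x y : ℕ → ℝ}

theorem affineRecursion_nonneg (ha : ∀ k, 0 ≤ a k) (hq : ∀ k, 0 ≤ q k) (hx0 : 0 ≤ x 0)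
    (hx : ∀ n, x (n + 1) = a (n + 1) * x n + q (n + 1)) (n : ℕ) : 0 ≤ x n := by
  induction n with
  | zero => exact hx0
  | succ n ih => rw [hx]; exact add_nonneg (mul_nonneg (ha _) ih) (hq _)

theorem affineRecursion_eq (hx : ∀ n, x (n + 1) = a (n + 1) * x n + q (n + 1))
    {j m : ℕ} (hjm : j ≤ m) :
    x m = (∏ k ∈ Ioc j m, a k) * x j + ∑ i ∈ Ioc j m, (∏ k ∈ Ioc i m, a k) * q i := by
  induction m, hjm using Nat.le_induction with
  | base => simp
  | succ m hjm ih =>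
    have hcoeff : ∀ i ∈ Ioc j m, (∏ k ∈ Ioc i (m + 1), a k) * q i
        = a (m + 1) * ((∏ k ∈ Ioc i m, a k) * q i) := fun i hi => by
      rw [prod_Ioc_succ_top (mem_Ioc.mp hi).2]; ring
    rw [hx, ih, prod_Ioc_succ_top hjm, sum_Ioc_succ_top hjm, sum_congr rfl hcoeff,
      ← mul_sum, Ioc_self, prod_empty]
    ring

theorem affineRecursion_le_of_prod_le (hb : ∀ k, 0 ≤ b k) (hq : ∀ k, 0 ≤ q k)
    (hx : ∀ n, x (n + 1) = a (n + 1) * x n + q (n + 1))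
    (hy : ∀ n, y (n + 1) = b (n + 1) * y n + q (n + 1))
    {j m : ℕ} (hjm : j ≤ m) (hxj : 0 ≤ x j) (hxy : x j ≤ y j)
    (hprod : ∀ i ∈ Icc j m, ∏ k ∈ Ioc i m, a k ≤ ∏ k ∈ Ioc i m, b k) :
    x m ≤ y m := by
  rw [affineRecursion_eq hx hjm, affineRecursion_eq hy hjm]
  exact add_le_add
    (mul_le_mul (hprod j (left_mem_Icc.mpr hjm)) hxy hxj (prod_nonneg fun k _ => hb k))
    (sum_le_sum fun i hi => mul_le_mul_of_nonneg_right (hprod i (Ioc_subset_Icc_self hi)) (hq i))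

end AffineRecursion

theorem prod_le_exp_sum_log {ι : Type*} {a : ι → ℝ} (ha : ∀ k, 0 ≤ a k) (s : Finset ι) :
    ∏ k ∈ s, a k ≤ Real.exp (∑ k ∈ s, Real.log (a k)) := by
  rw [Real.exp_sum]
  exact prod_le_prod (fun k _ => ha k) fun k _ => Real.le_exp_log (a k)

theorem prod_Ioc_le_exp_neg_pow {a : ℕ → ℝ} (ha : ∀ k, 0 ≤ a k) (c : ℝ) {i m : ℕ} (him : i ≤ m)
    (hdesc : ∑ k ∈ Icc 1 m, Real.log (a k) + c * m ≤ ∑ k ∈ Icc 1 i, Real.log (a k) + c * i) :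
    ∏ k ∈ Ioc i m, a k ≤ Real.exp (-c) ^ (m - i) := by
  have hsplit : ∑ k ∈ Ioc i m, Real.log (a k)
      = ∑ k ∈ Icc 1 m, Real.log (a k) - ∑ k ∈ Icc 1 i, Real.log (a k) := by
    have hIcc : ∀ n, Icc 1 n = Ioc 0 n := Icc_add_one_left_eq_Ioc 0
    rw [hIcc, hIcc, ← sum_Ioc_consecutive _ (Nat.zero_le i) him]
    ring
  calc ∏ k ∈ Ioc i m, a k ≤ Real.exp (∑ k ∈ Ioc i m, Real.log (a k)) := prod_le_exp_sum_log ha _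
    _ ≤ Real.exp (-c * (m - i : ℕ)) := by
      rw [Real.exp_le_exp, hsplit, Nat.cast_sub him]
      linarith
    _ = Real.exp (-c) ^ (m - i) := by rw [mul_comm, Real.exp_nat_mul]

noncomputable def nextLadderEpoch (T : ℕ → ℝ) (j : ℕ) : ℕ :=
  sInf {k | j < k ∧ T k < T j}

section NextLadderEpoch

variable {T : ℕ → ℝ} {j : ℕ}

theorem lt_nextLadderEpoch (h : {k | j < k ∧ T k < T j}.Nonempty) : j < nextLadderEpoch T j :=
  (Nat.sInf_mem h).1

theorem nextLadderEpoch_le (h : {k | j < k ∧ T k < T j}.Nonempty) {i : ℕ} (hji : j ≤ i)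
    (him : i ≤ nextLadderEpoch T j) : T (nextLadderEpoch T j) ≤ T i := by
  have hdrop : T (nextLadderEpoch T j) < T j := (Nat.sInf_mem h).2
  rcases hji.eq_or_lt with rfl | hji
  · exact hdrop.le
  rcases him.eq_or_lt with rfl | him
  · exact le_rfl
  have hnot : ¬(j < i ∧ T i < T j) := Nat.notMem_of_lt_sInf him
  push Not at hnot
  exact hdrop.le.trans (hnot hji)

end NextLadderEpoch

theorem stmt_8_general {Ω : Type*} [MeasureSpace Ω]
    (M Q : ℕ → Ω → ℝ)
    (hM0 : ∀ n ω, 0 ≤ M n ω) (hQ0 : ∀ n ω, 0 ≤ Q n ω)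
    (c γ : ℝ) (hγ : γ = Real.exp (-c))
    (S : ℕ → Ω → ℝ) (hS : ∀ n ω, S n ω = ∑ k ∈ Finset.Icc 1 n, Real.log (M k ω))
    (σ : ℕ → Ω → ℕ) (hσ0 : ∀ ω, σ 0 ω = 0)
    (hσ : ∀ n ω, σ (n + 1) ω =
      sInf {k : ℕ | σ n ω < k ∧ S k ω + c * k < S (σ n ω) ω + c * (σ n ω)})
    (hσfin : ∀ᵐ ω ∂ℙ, ∀ n : ℕ,
      {k : ℕ | σ n ω < k ∧ S k ω + c * k < S (σ n ω) ω + c * (σ n ω)}.Nonempty)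
    (X Xγ : ℕ → Ω → ℝ) (X0 : Ω → ℝ) (hX0nn : ∀ ω, 0 ≤ X0 ω)
    (hXinit : ∀ ω, X 0 ω = X0 ω) (hXγinit : ∀ ω, Xγ 0 ω = X0 ω)
    (hXrec : ∀ n ω, X (n + 1) ω = M (n + 1) ω * X n ω + Q (n + 1) ω)
    (hXγrec : ∀ n ω, Xγ (n + 1) ω = γ * Xγ n ω + Q (n + 1) ω) :
    ∀ᵐ ω ∂ℙ, ∀ n : ℕ, X (σ n ω) ω ≤ Xγ (σ n ω) ω := by
  filter_upwards [hσfin] with ω hfin n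
  induction n with
  | zero => rw [hσ0, hXinit, hXγinit]
  | succ n ih =>
    have hnext : σ (n + 1) ω = nextLadderEpoch (fun k => S k ω + c * k) (σ n ω) := hσ n ω
    have hX_nonneg : ∀ k, 0 ≤ X k ω :=
      affineRecursion_nonneg (hM0 · ω) (hQ0 · ω) ((hXinit ω).symm ▸ hX0nn ω) (hXrec · ω)
    refine affineRecursion_le_of_prod_le (a := (M · ω)) (b := fun _ => γ) (x := (X · ω))
      (y := (Xγ · ω)) (fun _ => hγ ▸ (Real.exp_pos _).le) (hQ0 · ω) (hXrec · ω) (hXγrec · ω)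
      (hnext ▸ (lt_nextLadderEpoch (hfin n)).le) (hX_nonneg _) ih fun i hi => ?_
    rw [prod_const, Nat.card_Ioc, hγ]
    refine prod_Ioc_le_exp_neg_pow (hM0 · ω) c (mem_Icc.mp hi).2 ?_
    simp only [← hS]
    exact hnext ▸ nextLadderEpoch_le (hfin n) (mem_Icc.mp hi).1 (hnext ▸ (mem_Icc.mp hi).2)

theorem stmt_8 {Ω : Type*} [MeasureSpace Ω] [IsProbabilityMeasure (ℙ : Measure Ω)]
    (M Q : ℕ → Ω → ℝ)
    (hmeas : ∀ n, Measurable (fun ω => (M n ω, Q n ω)))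
    (hindep : iIndepFun (fun n ω => (M n ω, Q n ω)) ℙ)
    (hident : ∀ n, IdentDistrib (fun ω => (M n ω, Q n ω)) (fun ω => (M 1 ω, Q 1 ω)) ℙ ℙ)
    (hM0 : ∀ n ω, 0 ≤ M n ω) (hQ0 : ∀ n ω, 0 ≤ Q n ω)
    (hMne0 : ℙ {ω | M 1 ω = 0} = 0)
    (c γ : ℝ) (hc : 0 ≤ c) (hγ : γ = Real.exp (-c))
    (S : ℕ → Ω → ℝ) (hS : ∀ n ω, S n ω = ∑ k ∈ Finset.Icc 1 n, Real.log (M k ω))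
    (σ : ℕ → Ω → ℕ) (hσ0 : ∀ ω, σ 0 ω = 0)
    (hσ : ∀ n ω, σ (n + 1) ω =
      sInf {k : ℕ | σ n ω < k ∧ S k ω + c * k < S (σ n ω) ω + c * (σ n ω)})
    (hσfin : ∀ᵐ ω ∂ℙ, ∀ n : ℕ,
      {k : ℕ | σ n ω < k ∧ S k ω + c * k < S (σ n ω) ω + c * (σ n ω)}.Nonempty)
    (X Xγ : ℕ → Ω → ℝ) (X0 : Ω → ℝ) (hX0nn : ∀ ω, 0 ≤ X0 ω)
    (hXinit : ∀ ω, X 0 ω = X0 ω) (hXγinit : ∀ ω, Xγ 0 ω = X0 ω)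
    (hXrec : ∀ n ω, X (n + 1) ω = M (n + 1) ω * X n ω + Q (n + 1) ω)
    (hXγrec : ∀ n ω, Xγ (n + 1) ω = γ * Xγ n ω + Q (n + 1) ω) :
    ∀ᵐ ω ∂ℙ, ∀ n : ℕ, X (σ n ω) ω ≤ Xγ (σ n ω) ω :=
  stmt_8_general M Q hM0 hQ0 c γ hγ S hS σ hσ0 hσ hσfin X Xγ X0 hX0nn hXinit hXγinit hXrec hXγrec
end

section
/- Under the setting of Lemma 4.4 with ladder epochs (σ_n) of (S_n + cn) (descending for part (a)), the backward iterations satisfy X̂_{σ_n} = Σ_{k=1}^{σ_n} Π_{k-1} Q_k ≤ Σ_{k=1}^{n} γ^{σ_{k-1}} Q*_k a.s. for all n, where Q*_k := Σ_{j=1}^{σ_k - σ_{k-1}} (Π_{σ_{k-1}+j-1}/Π_{σ_{k-1}}) Q_{σ_{k-1}+j} and Π_n = M₁⋯M_n. -/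
/-!
Cutting `{1, …, σ n}` at the ladder epochs splits the stopped perpetuity into blocks; the `k`-th
block equals `Π_{σ_{k-1}} Q*_k`. At a descending ladder epoch of `S_m + c m` the walk lies below
its starting value `0`, so `Π_{σ_m} = exp S_{σ_m} ≤ exp (-c σ_m) = γ ^ σ_m`, and `Q*_k ≥ 0`.
-/

open MeasureTheory ProbabilityTheory Filter Finset

theorem ae_forall_ne_of_identDistrib {ι Ω Ω' α : Type*} [Countable ι] [MeasurableSpace Ω]
    [MeasurableSpace Ω'] [MeasurableSpace α] [MeasurableSingletonClass α]
    {μ : Measure Ω} {ν : Measure Ω'} {X : ι → Ω → α} {Y : Ω' → α}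
    (hX : ∀ i, IdentDistrib (X i) Y μ ν) {a : α} (hY : ν {ω | Y ω = a} = 0) :
    ∀ᵐ ω ∂μ, ∀ i, X i ω ≠ a := by
  refine ae_all_iff.2 fun i => measure_eq_zero_iff_ae_notMem.1 ?_
  exact ((hX i).measure_mem_eq (measurableSet_singleton a)).trans hY

theorem sum_Icc_one_add {β : Type*} [AddCommMonoid β] (f : ℕ → β) (a d : ℕ) :
    ∑ k ∈ Icc 1 (a + d), f k = ∑ k ∈ Icc 1 a, f k + ∑ j ∈ Icc 1 d, f (a + j) := by
  induction d with
  | zero => simp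
  | succ d ih =>
    rw [← add_assoc, sum_Icc_succ_top (by omega), ih, sum_Icc_succ_top (by omega), add_assoc]
    rfl

theorem sum_Icc_one_eq_sum_blocks {β : Type*} [AddCommMonoid β] (f : ℕ → β) {σ : ℕ → ℕ}
    (hσ : Monotone σ) (hσ0 : σ 0 = 0) (n : ℕ) :
    ∑ k ∈ Icc 1 (σ n), f k =
      ∑ k ∈ Icc 1 n, ∑ j ∈ Icc 1 (σ k - σ (k - 1)), f (σ (k - 1) + j) := by
  induction n with
  | zero => simp [hσ0]
  | succ n ih =>
    rw [sum_Icc_succ_top (by omega), Nat.add_sub_cancel, ← ih, ← sum_Icc_one_add,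
      Nat.add_sub_of_le (hσ (Nat.le_add_right n 1))]

theorem sum_Icc_mul_le_sum_pow_mul_blocks {P Q : ℕ → ℝ} (hP : ∀ n, 0 < P n)
    (hQ : ∀ n, 0 ≤ Q n) {σ : ℕ → ℕ} (hσ : Monotone σ) (hσ0 : σ 0 = 0) {γ : ℝ}
    (hPσ : ∀ m, P (σ m) ≤ γ ^ σ m) (n : ℕ) :
    ∑ k ∈ Icc 1 (σ n), P (k - 1) * Q k ≤
      ∑ k ∈ Icc 1 n, γ ^ σ (k - 1) *
        ∑ j ∈ Icc 1 (σ k - σ (k - 1)), P (σ (k - 1) + j - 1) / P (σ (k - 1)) * Q (σ (k - 1) + j) := by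
  rw [sum_Icc_one_eq_sum_blocks _ hσ hσ0]
  refine sum_le_sum fun k _ => ?_
  have hblock : ∑ j ∈ Icc 1 (σ k - σ (k - 1)), P (σ (k - 1) + j - 1) * Q (σ (k - 1) + j) =
      P (σ (k - 1)) * ∑ j ∈ Icc 1 (σ k - σ (k - 1)),
        P (σ (k - 1) + j - 1) / P (σ (k - 1)) * Q (σ (k - 1) + j) := by
    rw [mul_sum]
    refine sum_congr rfl fun j _ => ?_
    field_simp [(hP (σ (k - 1))).ne']
  rw [hblock]
  refine mul_le_mul_of_nonneg_right (hPσ _) (sum_nonneg fun j _ => ?_)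
  exact mul_nonneg (div_nonneg (hP _).le (hP _).le) (hQ _)

theorem prod_le_exp_neg_mul_pow {ι : Type*} {s : Finset ι} {M : ι → ℝ} (hM : ∀ i ∈ s, 0 < M i)
    {c : ℝ} (h : ∑ i ∈ s, Real.log (M i) + c * #s ≤ 0) :
    ∏ i ∈ s, M i ≤ Real.exp (-c) ^ #s := by
  rw [← Real.exp_log (prod_pos hM), Real.log_prod fun i hi => (hM i hi).ne', ← Real.exp_nat_mul]
  exact Real.exp_le_exp.2 (by linarith)

theorem prod_Icc_le_exp_neg_mul_pow_of_ladder {M : ℕ → ℝ} (hM : ∀ n, 0 < M n) {c : ℝ}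
    {σ : ℕ → ℕ} (hσ0 : σ 0 = 0)
    (hdesc : ∀ n, ∑ k ∈ Icc 1 (σ (n + 1)), Real.log (M k) + c * σ (n + 1) <
      ∑ k ∈ Icc 1 (σ n), Real.log (M k) + c * σ n) (m : ℕ) :
    ∏ k ∈ Icc 1 (σ m), M k ≤ Real.exp (-c) ^ σ m := by
  have hanti : Antitone fun n => ∑ k ∈ Icc 1 (σ n), Real.log (M k) + c * σ n :=
    antitone_nat_of_succ_le fun n => (hdesc n).le
  have hbelow : ∑ k ∈ Icc 1 (σ m), Real.log (M k) + c * #(Icc 1 (σ m)) ≤ 0 := by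
    simpa [hσ0] using hanti (Nat.zero_le m)
  simpa using prod_le_exp_neg_mul_pow (fun k _ => hM k) hbelow

theorem stmt_9_general {Ω : Type*} [MeasureSpace Ω]
    (M Q : ℕ → Ω → ℝ)
    (hident : ∀ n, IdentDistrib (fun ω => (M n ω, Q n ω)) (fun ω => (M 1 ω, Q 1 ω)) ℙ ℙ)
    (hM0 : ∀ n ω, 0 ≤ M n ω) (hQ0 : ∀ n ω, 0 ≤ Q n ω)
    (hMne0 : ℙ {ω | M 1 ω = 0} = 0)
    (c γ : ℝ) (hγ : γ = Real.exp (-c))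
    (S : ℕ → Ω → ℝ) (hS : ∀ n ω, S n ω = ∑ k ∈ Finset.Icc 1 n, Real.log (M k ω))
    (P : ℕ → Ω → ℝ) (hP : ∀ n ω, P n ω = ∏ j ∈ Finset.Icc 1 n, M j ω)
    (σ : ℕ → Ω → ℕ) (hσ0 : ∀ ω, σ 0 ω = 0)
    (hσ : ∀ n ω, σ (n + 1) ω =
      sInf {k : ℕ | σ n ω < k ∧ S k ω + c * k < S (σ n ω) ω + c * (σ n ω)})
    (hσfin : ∀ᵐ ω ∂ℙ, ∀ n : ℕ,
      {k : ℕ | σ n ω < k ∧ S k ω + c * k < S (σ n ω) ω + c * (σ n ω)}.Nonempty)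
    (Qstar : ℕ → Ω → ℝ)
    (hQstar : ∀ k ω, Qstar k ω = ∑ j ∈ Finset.Icc 1 (σ k ω - σ (k - 1) ω),
      (P (σ (k - 1) ω + j - 1) ω / P (σ (k - 1) ω) ω) * Q (σ (k - 1) ω + j) ω) :
    ∀ᵐ ω ∂ℙ, ∀ n : ℕ,
      ∑ k ∈ Finset.Icc 1 (σ n ω), P (k - 1) ω * Q k ω ≤
        ∑ k ∈ Finset.Icc 1 n, γ ^ (σ (k - 1) ω) * Qstar k ω := by
  have hMne : ∀ᵐ ω ∂(ℙ : Measure Ω), ∀ n, M n ω ≠ 0 :=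
    ae_forall_ne_of_identDistrib (fun n => (hident n).comp measurable_fst) hMne0
  filter_upwards [hσfin, hMne] with ω hfin hMne n
  have hMpos n : 0 < M n ω := (hM0 n ω).lt_of_ne' (hMne n)
  have hladder n : σ n ω < σ (n + 1) ω ∧
      S (σ (n + 1) ω) ω + c * σ (n + 1) ω < S (σ n ω) ω + c * σ n ω :=
    hσ n ω ▸ Nat.sInf_mem (hfin n)
  have hPpos n : 0 < P n ω := hP n ω ▸ prod_pos fun j _ => hMpos j
  have hPσ m : P (σ m ω) ω ≤ γ ^ σ m ω := by
    rw [hP, hγ]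
    exact prod_Icc_le_exp_neg_mul_pow_of_ladder (σ := fun n => σ n ω) hMpos (hσ0 ω)
      (fun n => by simpa only [hS] using (hladder n).2) m
  simp only [hQstar]
  exact sum_Icc_mul_le_sum_pow_mul_blocks hPpos (fun n => hQ0 n ω)
    (monotone_nat_of_le_succ fun n => (hladder n).1.le) (hσ0 ω) hPσ n

theorem stmt_9 {Ω : Type*} [MeasureSpace Ω] [IsProbabilityMeasure (ℙ : Measure Ω)]
    (M Q : ℕ → Ω → ℝ)
    (hmeas : ∀ n, Measurable (fun ω => (M n ω, Q n ω)))
    (hindep : iIndepFun (fun n ω => (M n ω, Q n ω)) ℙ)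
    (hident : ∀ n, IdentDistrib (fun ω => (M n ω, Q n ω)) (fun ω => (M 1 ω, Q 1 ω)) ℙ ℙ)
    (hM0 : ∀ n ω, 0 ≤ M n ω) (hQ0 : ∀ n ω, 0 ≤ Q n ω)
    (hMne0 : ℙ {ω | M 1 ω = 0} = 0)
    (c γ : ℝ) (hc : 0 ≤ c) (hγ : γ = Real.exp (-c))
    (S : ℕ → Ω → ℝ) (hS : ∀ n ω, S n ω = ∑ k ∈ Finset.Icc 1 n, Real.log (M k ω))
    (P : ℕ → Ω → ℝ) (hP : ∀ n ω, P n ω = ∏ j ∈ Finset.Icc 1 n, M j ω)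
    (σ : ℕ → Ω → ℕ) (hσ0 : ∀ ω, σ 0 ω = 0)
    (hσ : ∀ n ω, σ (n + 1) ω =
      sInf {k : ℕ | σ n ω < k ∧ S k ω + c * k < S (σ n ω) ω + c * (σ n ω)})
    (hσfin : ∀ᵐ ω ∂ℙ, ∀ n : ℕ,
      {k : ℕ | σ n ω < k ∧ S k ω + c * k < S (σ n ω) ω + c * (σ n ω)}.Nonempty)
    (Qstar : ℕ → Ω → ℝ)
    (hQstar : ∀ k ω, Qstar k ω = ∑ j ∈ Finset.Icc 1 (σ k ω - σ (k - 1) ω),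
      (P (σ (k - 1) ω + j - 1) ω / P (σ (k - 1) ω) ω) * Q (σ (k - 1) ω + j) ω) :
    ∀ᵐ ω ∂ℙ, ∀ n : ℕ,
      ∑ k ∈ Finset.Icc 1 (σ n ω), P (k - 1) ω * Q k ω ≤
        ∑ k ∈ Finset.Icc 1 n, γ ^ (σ (k - 1) ω) * Qstar k ω :=
  stmt_9_general M Q hident hM0 hQ0 hMne0 c γ hγ S hS P hP σ hσ0 hσ hσfin Qstar hQstar
end

section
/- Let (η_k)_{k≥1} be iid real random variables and σ an integrable stopping time with respect to the natural filtration of an iid sequence containing the η_k. If lim_{t→∞} t·P(η₁ > t) = s ∈ [0,∞), then lim_{t→∞} t·P(max_{1≤k≤σ} η_k > t) = s·E[σ]. -/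
/-!
Write `q t = P(η₁ > t)`. The event `max_{1≤k≤σ} η_k > t` is the union over `k` of
`{k < σ} ∩ {η_{k+1} > t}`, and `{k < σ}` is determined by the first `k` steps, hence independent
of `η_{k+1}`; summing gives the Wald-type bound `P(max > t) ≤ E[σ] q t`. Conversely, splitting
according to the first index at which `t` is exceeded gives the disjoint events
`{k < σ, η_1, …, η_k ≤ t, η_{k+1} > t}`, whose probabilities are at least
`(P(k < σ) - k q t) q t`. Since `t q t → s` forces `q t → 0`, both bounds multiplied by `t`
tend to `s E[σ] = s ∑ₖ P(k < σ)`.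
-/

open MeasureTheory ProbabilityTheory Filter Topology Function
open scoped ENNReal

namespace MeasureTheory

variable {Ω : Type*} {m : MeasurableSpace Ω} {μ : Measure Ω}

lemma lintegral_natCast_eq_tsum_measure_lt {σ : Ω → ℕ} (hσ : Measurable σ) :
    ∫⁻ ω, (σ ω : ℝ≥0∞) ∂μ = ∑' k : ℕ, μ {ω | k < σ ω} := by
  have hmeas (k : ℕ) : MeasurableSet {ω | k < σ ω} := hσ measurableSet_Ioi
  calc ∫⁻ ω, (σ ω : ℝ≥0∞) ∂μ
      = ∫⁻ ω, ∑' k : ℕ, {ω | k < σ ω}.indicator 1 ω ∂μ := by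
        congr with ω
        change (σ ω : ℝ≥0∞) = ∑' k : ℕ, (Set.Iio (σ ω)).indicator 1 k
        rw [← _root_.tsum_subtype]
        simp
    _ = ∑' k : ℕ, μ {ω | k < σ ω} := by
        rw [lintegral_tsum fun k => (measurable_one.indicator (hmeas k)).aemeasurable]
        exact tsum_congr fun k => lintegral_indicator_one (hmeas k)

lemma integral_natCast_eq_toReal_lintegral {σ : Ω → ℕ} (hσ : Measurable σ) :
    ∫ ω, (σ ω : ℝ) ∂μ = (∫⁻ ω, (σ ω : ℝ≥0∞) ∂μ).toReal := by
  rw [← integral_toReal (f := fun ω => (σ ω : ℝ≥0∞)) (measurable_from_nat.comp hσ).aemeasurable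
    (ae_of_all _ fun ω => by simp)]
  simp

lemma hasSum_measureReal_lt_integral {σ : Ω → ℕ} (hσ : Measurable σ)
    (hint : Integrable (fun ω => (σ ω : ℝ)) μ) :
    HasSum (fun k : ℕ => μ.real {ω | k < σ ω}) (∫ ω, (σ ω : ℝ) ∂μ) := by
  have hfin : ∑' k : ℕ, μ {ω | k < σ ω} ≠ ∞ := by
    simpa [← lintegral_natCast_eq_tsum_measure_lt hσ] using hint.lintegral_lt_top.ne
  rw [integral_natCast_eq_toReal_lintegral hσ, lintegral_natCast_eq_tsum_measure_lt hσ,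
    ENNReal.tsum_toReal_eq fun k => (ENNReal.lt_top_of_tsum_ne_top hfin k).ne]
  exact (ENNReal.summable_toReal hfin).hasSum

lemma IsStoppingTime.measurableSet_natCast_lt {ℱ : Filtration ℕ m} {σ : Ω → ℕ}
    (hσ : IsStoppingTime ℱ (fun ω => (σ ω : WithTop ℕ))) (k : ℕ) :
    MeasurableSet[ℱ k] {ω | k < σ ω} := by
  simpa using hσ.measurableSet_gt k

lemma IsStoppingTime.measurable_natCast {ℱ : Filtration ℕ m} {σ : Ω → ℕ}
    (hσ : IsStoppingTime ℱ (fun ω => (σ ω : WithTop ℕ))) : Measurable σ :=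
  measurable_to_countable' fun k => by
    change MeasurableSet {ω | σ ω = k}
    convert ℱ.le k _ (hσ.measurableSet_eq k) using 3
    simp

end MeasureTheory

namespace ProbabilityTheory

variable {Ω : Type*} {m : MeasurableSpace Ω} {μ : Measure Ω}

lemma iIndepFun.indep_natural_comap {β : Type*} [TopologicalSpace β]
    [TopologicalSpace.MetrizableSpace β] [MeasurableSpace β] [BorelSpace β] {ξ : ℕ → Ω → β}
    (hξ : ∀ n, StronglyMeasurable (ξ n)) (hindep : iIndepFun ξ μ) {k j : ℕ} (hkj : k < j) :
    Indep (Filtration.natural ξ hξ k) (MeasurableSpace.comap (ξ j) inferInstance) μ := by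
  have hdisj : Disjoint (Set.Iic k) {j} := by simpa using hkj.not_ge
  have h := indep_iSup_of_disjoint (fun i => (hξ i).measurable.comap_le) hindep hdisj
  simp only [Set.mem_Iic, Set.mem_singleton_iff, iSup_iSup_eq_left] at h
  exact h

section MaxUpToStoppingTime

variable {ℱ : Filtration ℕ m} {η : ℕ → Ω → ℝ} {σ : Ω → ℕ}

lemma measure_inter_lt_eq_mul {k : ℕ}
    (hindep : Indep (ℱ k) (MeasurableSpace.comap (η (k + 1)) inferInstance) μ)
    (hident : IdentDistrib (η (k + 1)) (η 1) μ μ) {B : Set Ω} (hB : MeasurableSet[ℱ k] B)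
    (t : ℝ) : μ (B ∩ {ω | t < η (k + 1) ω}) = μ B * μ {ω | t < η 1 ω} := by
  have htail : μ {ω | t < η 1 ω} = μ {ω | t < η (k + 1) ω} :=
    (hident.measure_mem_eq measurableSet_Ioi).symm
  rw [htail]
  exact (hindep.indepSet_of_measurableSet hB
    ⟨Set.Ioi t, measurableSet_Ioi, rfl⟩).measure_inter_eq_mul

lemma measure_exists_lt_le_lintegral_mul (hσ : IsStoppingTime ℱ (fun ω => (σ ω : WithTop ℕ)))
    (hindep : ∀ k, Indep (ℱ k) (MeasurableSpace.comap (η (k + 1)) inferInstance) μ)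
    (hident : ∀ k, IdentDistrib (η k) (η 1) μ μ) (t : ℝ) :
    μ {ω | ∃ k ∈ Finset.Icc 1 (σ ω), t < η k ω}
      ≤ (∫⁻ ω, (σ ω : ℝ≥0∞) ∂μ) * μ {ω | t < η 1 ω} := by
  have hcover : {ω | ∃ k ∈ Finset.Icc 1 (σ ω), t < η k ω}
      ⊆ ⋃ k : ℕ, {ω | k < σ ω} ∩ {ω | t < η (k + 1) ω} := by
    rintro ω ⟨k, hk, hkt⟩
    obtain ⟨hk1, hkσ⟩ := Finset.mem_Icc.mp hk
    obtain ⟨j, rfl⟩ := Nat.exists_eq_add_of_le' hk1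
    exact Set.mem_iUnion.mpr ⟨j, hkσ, hkt⟩
  calc _ ≤ ∑' k : ℕ, μ ({ω | k < σ ω} ∩ {ω | t < η (k + 1) ω}) :=
        (measure_mono hcover).trans (measure_iUnion_le _)
    _ = ∑' k : ℕ, μ {ω | k < σ ω} * μ {ω | t < η 1 ω} := tsum_congr fun k =>
        measure_inter_lt_eq_mul (hindep k) (hident _) (hσ.measurableSet_natCast_lt k) t
    _ = _ := by
        rw [ENNReal.tsum_mul_right, lintegral_natCast_eq_tsum_measure_lt hσ.measurable_natCast]

lemma measureReal_exists_lt_le_integral_mul [IsFiniteMeasure μ]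
    (hσ : IsStoppingTime ℱ (fun ω => (σ ω : WithTop ℕ)))
    (hint : Integrable (fun ω => (σ ω : ℝ)) μ)
    (hindep : ∀ k, Indep (ℱ k) (MeasurableSpace.comap (η (k + 1)) inferInstance) μ)
    (hident : ∀ k, IdentDistrib (η k) (η 1) μ μ) (t : ℝ) :
    μ.real {ω | ∃ k ∈ Finset.Icc 1 (σ ω), t < η k ω}
      ≤ (∫ ω, (σ ω : ℝ) ∂μ) * μ.real {ω | t < η 1 ω} := by
  have hfin : ∫⁻ ω, (σ ω : ℝ≥0∞) ∂μ ≠ ∞ := by simpa using hint.lintegral_lt_top.ne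
  rw [integral_natCast_eq_toReal_lintegral hσ.measurable_natCast, measureReal_def,
    measureReal_def, ← ENNReal.toReal_mul]
  exact ENNReal.toReal_mono (ENNReal.mul_ne_top hfin (measure_ne_top _ _))
    (measure_exists_lt_le_lintegral_mul hσ hindep hident t)

lemma measureReal_lt_sub_le_measureReal_forall_le [IsFiniteMeasure μ]
    (hident : ∀ k, IdentDistrib (η k) (η 1) μ μ) (t : ℝ) (k : ℕ) :
    μ.real {ω | k < σ ω} - k * μ.real {ω | t < η 1 ω}
      ≤ μ.real ({ω | k < σ ω} ∩ {ω | ∀ j ∈ Finset.Icc 1 k, η j ω ≤ t}) := by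
  have hcover : {ω | k < σ ω} ⊆ ({ω | k < σ ω} ∩ {ω | ∀ j ∈ Finset.Icc 1 k, η j ω ≤ t})
      ∪ ⋃ j ∈ Finset.Icc 1 k, {ω | t < η j ω} := by
    intro ω hω
    by_cases h : ∀ j ∈ Finset.Icc 1 k, η j ω ≤ t
    · exact Or.inl ⟨hω, h⟩
    · push Not at h
      obtain ⟨j, hj, hjt⟩ := h
      exact Or.inr (Set.mem_biUnion hj hjt)
  have htail (j : ℕ) : μ.real {ω | t < η j ω} = μ.real {ω | t < η 1 ω} :=
    congrArg ENNReal.toReal ((hident j).measure_mem_eq measurableSet_Ioi)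
  have hunion :
      μ.real (⋃ j ∈ Finset.Icc 1 k, {ω | t < η j ω}) ≤ k * μ.real {ω | t < η 1 ω} := by
    refine (measureReal_biUnion_finset_le _ _).trans_eq ?_
    simp [htail]
  linarith [measureReal_mono (μ := μ) hcover, measureReal_union_le (μ := μ)
    ({ω | k < σ ω} ∩ {ω | ∀ j ∈ Finset.Icc 1 k, η j ω ≤ t}) (⋃ j ∈ Finset.Icc 1 k, {ω | t < η j ω})]

lemma sum_le_measureReal_exists_lt [IsFiniteMeasure μ] (hadapt : Adapted ℱ η)
    (hσ : IsStoppingTime ℱ (fun ω => (σ ω : WithTop ℕ)))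
    (hindep : ∀ k, Indep (ℱ k) (MeasurableSpace.comap (η (k + 1)) inferInstance) μ)
    (hident : ∀ k, IdentDistrib (η k) (η 1) μ μ) (N : ℕ) (t : ℝ) :
    ∑ k ∈ Finset.range N,
        (μ.real {ω | k < σ ω} - k * μ.real {ω | t < η 1 ω}) * μ.real {ω | t < η 1 ω}
      ≤ μ.real {ω | ∃ k ∈ Finset.Icc 1 (σ ω), t < η k ω} := by
  set D : ℕ → Set Ω := fun k => {ω | k < σ ω} ∩ {ω | ∀ j ∈ Finset.Icc 1 k, η j ω ≤ t}
  set C : ℕ → Set Ω := fun k => D k ∩ {ω | t < η (k + 1) ω}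
  have hD (k : ℕ) : MeasurableSet[ℱ k] (D k) := by
    refine (hσ.measurableSet_natCast_lt k).inter ?_
    simp only [Set.ofPred_forall]
    exact Finset.measurableSet_biInter _ fun j hj => measurableSet_le
      ((hadapt j).mono (ℱ.mono (Finset.mem_Icc.mp hj).2) le_rfl) measurable_const
  have hC (k : ℕ) : MeasurableSet (C k) :=
    (ℱ.le k _ (hD k)).inter (measurableSet_lt measurable_const ((hadapt _).mono (ℱ.le _) le_rfl))
  have hdisj : Pairwise (Disjoint on C) := by
    refine (pairwise_disjoint_on C).mpr fun i j hij => Set.disjoint_left.mpr ?_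
    rintro ω ⟨-, hi⟩ ⟨⟨-, hj⟩, -⟩
    exact (hj (i + 1) (Finset.mem_Icc.mpr ⟨by omega, hij⟩)).not_gt hi
  have hsub : ⋃ k ∈ Finset.range N, C k ⊆ {ω | ∃ k ∈ Finset.Icc 1 (σ ω), t < η k ω} := by
    refine Set.iUnion₂_subset fun k _ => ?_
    rintro ω ⟨⟨hkσ, -⟩, hkt⟩
    exact ⟨k + 1, Finset.mem_Icc.mpr ⟨by omega, hkσ⟩, hkt⟩
  calc _ ≤ ∑ k ∈ Finset.range N, μ.real (D k) * μ.real {ω | t < η 1 ω} :=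
        Finset.sum_le_sum fun k _ => mul_le_mul_of_nonneg_right
          (measureReal_lt_sub_le_measureReal_forall_le hident t k) measureReal_nonneg
    _ = ∑ k ∈ Finset.range N, μ.real (C k) := by
        refine Finset.sum_congr rfl fun k _ => ?_
        simp only [C, measureReal_def, ← ENNReal.toReal_mul,
          measure_inter_lt_eq_mul (hindep k) (hident _) (hD k) t]
    _ = μ.real (⋃ k ∈ Finset.range N, C k) :=
        (measureReal_biUnion_finset (hdisj.set_pairwise _) fun k _ => hC k).symm
    _ ≤ _ := measureReal_mono hsub

end MaxUpToStoppingTime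

end ProbabilityTheory

lemma tendsto_self_mul_of_le_mul_of_sum_le {q u : ℝ → ℝ} {p : ℕ → ℝ} {s E : ℝ}
    (hq : Tendsto (fun t => t * q t) atTop (𝓝 s)) (hp : HasSum p E)
    (hupper : ∀ t, u t ≤ E * q t)
    (hlower : ∀ N t, ∑ k ∈ Finset.range N, (p k - k * q t) * q t ≤ u t) :
    Tendsto (fun t => t * u t) atTop (𝓝 (s * E)) := by
  have hq0 : Tendsto q atTop (𝓝 0) := by
    have h := hq.mul tendsto_inv_atTop_zero
    rw [mul_zero] at h
    refine h.congr' ?_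
    filter_upwards [eventually_ne_atTop 0] with t ht
    field_simp
  have hlower_lim (N : ℕ) :
      Tendsto (fun t => t * ∑ k ∈ Finset.range N, (p k - k * q t) * q t) atTop
        (𝓝 (s * ∑ k ∈ Finset.range N, p k)) := by
    simp only [Finset.mul_sum]
    refine tendsto_finsetSum _ fun k _ => ?_
    have h := hq.mul ((hq0.const_mul (k : ℝ)).const_sub (p k))
    simp only [mul_zero, sub_zero] at h
    exact h.congr fun t => by ring
  refine tendsto_order.mpr ⟨fun a ha => ?_, fun b hb => ?_⟩
  · obtain ⟨N, hN⟩ := ((hp.tendsto_sum_nat.const_mul s).eventually_const_lt ha).exists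
    filter_upwards [(hlower_lim N).eventually_const_lt hN, eventually_ge_atTop 0] with t ht ht0
    exact ht.trans_le (mul_le_mul_of_nonneg_left (hlower N t) ht0)
  · filter_upwards [(hq.mul_const E).eventually_lt_const hb, eventually_ge_atTop 0] with t ht ht0
    calc t * u t ≤ t * (E * q t) := mul_le_mul_of_nonneg_left (hupper t) ht0
      _ = t * q t * E := by ring
      _ < b := ht

theorem stmt_10_general {Ω : Type*} [MeasureSpace Ω] [IsProbabilityMeasure (ℙ : Measure Ω)]
    (ξ : ℕ → Ω → ℝ × ℝ) (hξsm : ∀ n, StronglyMeasurable (ξ n))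
    (hindep : iIndepFun ξ ℙ)
    (hident : ∀ n, IdentDistrib (ξ n) (ξ 1) ℙ ℙ)
    (f : ℝ × ℝ → ℝ) (hf : Measurable f)
    (η : ℕ → Ω → ℝ) (hη : ∀ n ω, η n ω = f (ξ n ω))
    (σ : Ω → ℕ) (hσ : IsStoppingTime (Filtration.natural ξ hξsm) (fun ω => (σ ω : WithTop ℕ)))
    (hσint : Integrable (fun ω => (σ ω : ℝ)))
    (s : ℝ)
    (htail : Tendsto (fun t : ℝ => t * (ℙ {ω | t < η 1 ω}).toReal) atTop (nhds s)) :
    Tendsto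
      (fun t : ℝ => t * (ℙ {ω | ∃ k ∈ Finset.Icc 1 (σ ω), t < η k ω}).toReal)
      atTop (nhds (s * ∫ ω, (σ ω : ℝ))) := by
  have hηξ (n : ℕ) : η n = f ∘ ξ n := funext (hη n)
  have hadapt : Adapted (Filtration.natural ξ hξsm) η := fun n => by
    rw [hηξ]
    exact hf.comp ((Filtration.stronglyAdapted_natural hξsm) n).measurable
  have hindepη (k : ℕ) : Indep (Filtration.natural ξ hξsm k)
      (MeasurableSpace.comap (η (k + 1)) inferInstance) ℙ := by
    refine indep_of_indep_of_le_right (hindep.indep_natural_comap hξsm k.lt_succ_self) ?_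
    rw [hηξ]
    exact (hf.comp (comap_measurable (ξ (k + 1)))).comap_le
  have hidentη (n : ℕ) : IdentDistrib (η n) (η 1) ℙ ℙ := by
    rw [hηξ, hηξ]
    exact (hident n).comp hf
  simp only [← measureReal_def] at htail ⊢
  exact tendsto_self_mul_of_le_mul_of_sum_le htail
    (hasSum_measureReal_lt_integral hσ.measurable_natCast hσint)
    (measureReal_exists_lt_le_integral_mul hσ hσint hindepη hidentη)
    (sum_le_measureReal_exists_lt hadapt hσ hindepη hidentη)

theorem stmt_10 {Ω : Type*} [MeasureSpace Ω] [IsProbabilityMeasure (ℙ : Measure Ω)]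
    (ξ : ℕ → Ω → ℝ × ℝ) (hξsm : ∀ n, StronglyMeasurable (ξ n))
    (hindep : iIndepFun ξ ℙ)
    (hident : ∀ n, IdentDistrib (ξ n) (ξ 1) ℙ ℙ)
    (f : ℝ × ℝ → ℝ) (hf : Measurable f)
    (η : ℕ → Ω → ℝ) (hη : ∀ n ω, η n ω = f (ξ n ω))
    (σ : Ω → ℕ) (hσ : IsStoppingTime (Filtration.natural ξ hξsm) (fun ω => (σ ω : WithTop ℕ)))
    (hσ1 : ∀ ω, 1 ≤ σ ω) (hσint : Integrable (fun ω => (σ ω : ℝ)))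
    (s : ℝ) (hs : 0 ≤ s)
    (htail : Tendsto (fun t : ℝ => t * (ℙ {ω | t < η 1 ω}).toReal) atTop (nhds s)) :
    Tendsto
      (fun t : ℝ => t * (ℙ {ω | ∃ k ∈ Finset.Icc 1 (σ ω), t < η k ω}).toReal)
      atTop (nhds (s * ∫ ω, (σ ω : ℝ))) :=
  stmt_10_general ξ hξsm hindep hident f hf η hη σ hσ hσint s htail
end

section
/- Let γ ∈ (0,1), (Q_n)_{n≥1} iid nonnegative random variables, σ an integrable stopping time, and Q(γ) := Σ_{k=1}^σ γ^{σ-k} Q_k. If lim_{t→∞} t·P(log Q₁ > t) = s ∈ [0,∞], then lim_{t→∞} t·P(log Q(γ) > t) = s·E[σ]. -/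
open MeasureTheory ProbabilityTheory Filter Set Topology Finset
open scoped ENNReal

/-!
Outside an event of probability `o(1/t)` we have `σ ≤ ε t`, because `σ` is integrable. There the
bounds `γ ^ (ε t) · max_{k ≤ σ} Q_k ≤ Q(γ) ≤ σ · max_{k ≤ σ} Q_k` say that, on the log scale,
`log Q(γ) > t` is squeezed between "some `Q_k` with `k ≤ σ` exceeds `e^{t + ε t log γ⁻¹}`" and
"some `Q_k` with `k ≤ σ` exceeds `e^{(1 - ε) t}`". Since `{k ≤ σ}` is determined by
`Q_1, …, Q_{k-1}`, it is independent of `Q_k`, so `P(k ≤ σ, Q_k > x) = P(k ≤ σ) P(Q_1 > x)`, and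
these sum to `E[σ] P(Q_1 > x)`. This bounds the union from above, and by Bonferroni's inequality
from below up to pairwise terms of total size `≤ ε t E[σ] P(Q_1 > x)² = O(ε / t)`. Letting
`ε → 0` gives the limit `s E[σ]`; for `s = ∞` the single term `k = 1` already gives `∞`.
-/

theorem sum_measure_le_measure_biUnion_add_sum_measure_inter {Ω : Type*} [MeasurableSpace Ω]
    (μ : Measure Ω) {A : ℕ → Set Ω} (hA : ∀ k, MeasurableSet (A k)) (n : ℕ) :
    ∑ k ∈ range n, μ (A k) ≤
      μ (⋃ k ∈ range n, A k) + ∑ k ∈ range n, ∑ j ∈ range k, μ (A j ∩ A k) := by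
  induction n with
  | zero => simp
  | succ n ih =>
    set U := ⋃ k ∈ range n, A k
    have hinter : μ (U ∩ A n) ≤ ∑ j ∈ range n, μ (A j ∩ A n) := by
      rw [Set.iUnion₂_inter]
      exact measure_biUnion_finset_le _ _
    calc ∑ k ∈ range (n + 1), μ (A k)
        ≤ μ U + μ (A n) + ∑ k ∈ range n, ∑ j ∈ range k, μ (A j ∩ A k) := by
          rw [sum_range_succ, add_right_comm]; gcongr
      _ = μ (U ∪ A n) + μ (U ∩ A n) + ∑ k ∈ range n, ∑ j ∈ range k, μ (A j ∩ A k) := by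
          rw [measure_union_add_inter _ (hA n)]
      _ ≤ μ (⋃ k ∈ range (n + 1), A k) +
            ∑ k ∈ range (n + 1), ∑ j ∈ range k, μ (A j ∩ A k) := by
          rw [sum_range_succ, range_add_one, set_biUnion_insert, union_comm, add_assoc,
            add_comm (∑ j ∈ range n, _)]
          gcongr

theorem lintegral_natCast_eq_tsum_measure_lt {Ω : Type*} [MeasurableSpace Ω] (μ : Measure Ω)
    {σ : Ω → ℕ} (hσ : Measurable σ) :
    ∫⁻ ω, (σ ω : ℝ≥0∞) ∂μ = ∑' k : ℕ, μ {ω | k < σ ω} := by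
  have hmeas : ∀ k : ℕ, MeasurableSet {ω | k < σ ω} := fun k => measurableSet_lt measurable_const hσ
  have hcount : ∀ ω, (σ ω : ℝ≥0∞) = ∑' k : ℕ, {ω | k < σ ω}.indicator 1 ω := by
    intro ω
    rw [tsum_eq_sum (s := range (σ ω)) (fun k hk => by simpa using hk),
      sum_congr rfl fun k hk => indicator_of_mem (s := {ω | k < σ ω}) (mem_range.mp hk) 1]
    simp
  simp_rw [hcount]
  rw [lintegral_tsum fun k => (measurable_one.indicator (hmeas k)).aemeasurable]
  exact tsum_congr fun k => lintegral_indicator_one (hmeas k)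

theorem tendsto_mul_measure_lt_of_integrable {Ω : Type*} [MeasurableSpace Ω] {μ : Measure Ω}
    {X : Ω → ℝ} (hXm : Measurable X) (hX : Integrable X μ) :
    Tendsto (fun t : ℝ => ENNReal.ofReal t * μ {ω | t < X ω}) atTop (𝓝 0) := by
  have hmeas : ∀ t, MeasurableSet {ω | t < X ω} := fun t => measurableSet_lt measurable_const hXm
  have hdom : Tendsto
      (fun t : ℝ => ∫⁻ ω, {ω | t < X ω}.indicator (fun ω => ENNReal.ofReal (X ω)) ω ∂μ)
      atTop (𝓝 (∫⁻ _, 0 ∂μ)) := by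
    refine tendsto_lintegral_filter_of_dominated_convergence (fun ω => ENNReal.ofReal (X ω))
      (Eventually.of_forall fun t => hXm.ennreal_ofReal.indicator (hmeas t))
      (Eventually.of_forall fun t => ae_of_all _ fun ω => indicator_le_self _ _ _)
      hX.lintegral_lt_top.ne (ae_of_all _ fun ω => ?_)
    refine tendsto_const_nhds.congr' ?_
    filter_upwards [eventually_ge_atTop (X ω)] with t ht
    simp [not_lt.mpr ht]
  rw [lintegral_zero] at hdom
  refine tendsto_of_tendsto_of_tendsto_of_le_of_le' tendsto_const_nhds hdom
    (Eventually.of_forall fun t => zero_le) ?_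
  filter_upwards with t
  rw [lintegral_indicator (hmeas t), ← setLIntegral_const]
  exact setLIntegral_mono hXm.ennreal_ofReal fun ω hω => ENNReal.ofReal_le_ofReal (le_of_lt hω)

theorem measurable_of_isStoppingTime {Ω : Type*} {m : MeasurableSpace Ω} {f : Filtration ℕ m}
    {σ : Ω → ℕ} (hσ : IsStoppingTime f (fun ω => (σ ω : WithTop ℕ))) : Measurable σ :=
  measurable_to_countable' fun n => by
    convert hσ.measurable' (measurableSet_singleton (n : WithTop ℕ)) using 1
    ext; simp

theorem tendsto_mul_measure_lt_log_iff {Ω : Type*} [MeasurableSpace Ω] {μ : Measure Ω}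
    {f : Ω → ℝ} (hf : ∀ ω, 0 ≤ f ω) {l : Filter ℝ≥0∞} :
    Tendsto (fun t => ENNReal.ofReal t * μ {ω | t < Real.log (f ω)}) atTop l ↔
      Tendsto (fun t => ENNReal.ofReal t * μ {ω | Real.exp t < f ω}) atTop l := by
  refine tendsto_congr' ?_
  filter_upwards [eventually_gt_atTop 0] with t ht
  congr 2
  ext ω
  rcases (hf ω).eq_or_lt with h | h
  · simp only [mem_ofPred_eq, ← h, Real.log_zero]
    exact iff_of_false ht.not_gt (Real.exp_pos t).not_gt
  · exact Real.lt_log_iff_exp_lt h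

theorem pow_mul_exp_add_mul_log_inv {γ : ℝ} (hγ : 0 < γ) (t : ℝ) (N : ℕ) :
    γ ^ N * Real.exp (t + N * Real.log γ⁻¹) = Real.exp t := by
  rw [Real.exp_add, mul_comm, Real.exp_nat_mul, Real.exp_log (inv_pos.mpr hγ), mul_assoc,
    ← mul_pow, inv_mul_cancel₀ hγ.ne', one_pow, mul_one]

theorem le_liminf_add_of_eventually_le_add {ι : Type*} {l : Filter ι} [l.NeBot]
    {f g h : ι → ℝ≥0∞} {a b : ℝ≥0∞} (hg : Tendsto g l (𝓝 a)) (hh : Tendsto h l (𝓝 b))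
    (hle : ∀ᶠ i in l, g i ≤ f i + h i) : a ≤ liminf f l + b := by
  rcases eq_or_ne b ∞ with rfl | hb
  · simp
  have hexcess : Tendsto (fun i => h i - b) l (𝓝 0) := by
    simpa using ENNReal.Tendsto.sub hh tendsto_const_nhds (Or.inr hb)
  calc a = liminf g l := hg.liminf_eq.symm
    _ ≤ liminf ((fun i => f i + b) + fun i => h i - b) l :=
        liminf_le_liminf (hle.mono fun i hi => hi.trans (by
          rw [Pi.add_apply, add_assoc]; gcongr; exact le_add_tsub))
    _ = liminf (fun i => f i + b) l := ENNReal.liminf_add_of_right_tendsto_zero hexcess _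
    _ = liminf f l + b := liminf_add_const l f b (by isBoundedDefault) (by isBoundedDefault)

theorem tendsto_ofReal_mul_nhdsGT_zero {g : ℝ → ℝ} (hg : ContinuousAt g 0) {a : ℝ≥0∞}
    (ha : ENNReal.ofReal (g 0) ≠ 0 ∨ a ≠ ∞) :
    Tendsto (fun ε => ENNReal.ofReal (g ε) * a) (𝓝[>] 0) (𝓝 (ENNReal.ofReal (g 0) * a)) :=
  ENNReal.Tendsto.mul_const ((ENNReal.tendsto_ofReal hg.tendsto).mono_left nhdsWithin_le_nhds) ha

section Asymptotics

/- `R t`, `G y`, `H x` and `T` play the roles of `P(Q(γ) > e^t)`, `P(Q_1 > y)`, `P(σ > x)` and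
`E[σ]`. -/
variable {R G H : ℝ → ℝ≥0∞} {s : ℝ≥0∞}

theorem limsup_mul_le_ofReal_inv_mul {T : ℝ≥0∞} {ε : ℝ} (hε0 : 0 < ε) (hε1 : ε < 1)
    (hT : T ≠ ∞) (hF : Tendsto (fun t => ENNReal.ofReal t * G (Real.exp t)) atTop (𝓝 s))
    (hH : Tendsto (fun x => ENNReal.ofReal x * H x) atTop (𝓝 0))
    (hR : ∀ t, R t ≤ H (Real.exp (ε * t)) + T * G (Real.exp ((1 - ε) * t))) :
    limsup (fun t => ENNReal.ofReal t * R t) atTop ≤ ENNReal.ofReal (1 - ε)⁻¹ * (s * T) := by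
  set bound : ℝ → ℝ≥0∞ := fun t =>
    ENNReal.ofReal ε⁻¹ * (ENNReal.ofReal (Real.exp (ε * t)) * H (Real.exp (ε * t))) +
      ENNReal.ofReal (1 - ε)⁻¹ * (ENNReal.ofReal ((1 - ε) * t) * G (Real.exp ((1 - ε) * t)) * T)
  have hbound : ∀ t, ENNReal.ofReal t * R t ≤ bound t := by
    intro t
    have ht_le : ENNReal.ofReal t ≤ ENNReal.ofReal ε⁻¹ * ENNReal.ofReal (Real.exp (ε * t)) := by
      rw [← ENNReal.ofReal_mul (by positivity)]
      refine ENNReal.ofReal_le_ofReal ((le_inv_mul_iff₀ hε0).mpr ?_)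
      linarith [Real.add_one_le_exp (ε * t)]
    have ht_eq : ENNReal.ofReal t = ENNReal.ofReal (1 - ε)⁻¹ * ENNReal.ofReal ((1 - ε) * t) := by
      rw [← ENNReal.ofReal_mul (by simp [hε1.le]), inv_mul_cancel_left₀ (by linarith)]
    calc ENNReal.ofReal t * R t
        ≤ ENNReal.ofReal t * H (Real.exp (ε * t)) +
            ENNReal.ofReal t * (T * G (Real.exp ((1 - ε) * t))) := by
          rw [← mul_add]; gcongr; exact hR t
      _ ≤ bound t := by
          refine add_le_add ?_ (by rw [ht_eq]; apply le_of_eq; ring)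
          calc _ ≤ ENNReal.ofReal ε⁻¹ * ENNReal.ofReal (Real.exp (ε * t)) *
                H (Real.exp (ε * t)) := by gcongr
            _ = _ := mul_assoc _ _ _
  have hlim : Tendsto bound atTop
      (𝓝 (ENNReal.ofReal ε⁻¹ * 0 + ENNReal.ofReal (1 - ε)⁻¹ * (s * T))) := by
    refine Tendsto.add ?_ ?_
    · exact ENNReal.Tendsto.const_mul (hH.comp (Real.tendsto_exp_atTop.comp
        (tendsto_id.const_mul_atTop hε0))) (Or.inr ENNReal.ofReal_ne_top)
    · exact ENNReal.Tendsto.const_mul (ENNReal.Tendsto.mul_const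
        (hF.comp (tendsto_id.const_mul_atTop (by linarith))) (Or.inr hT))
        (Or.inr ENNReal.ofReal_ne_top)
  calc limsup (fun t => ENNReal.ofReal t * R t) atTop ≤ limsup bound atTop :=
        limsup_le_limsup (Eventually.of_forall hbound)
    _ = _ := by rw [hlim.limsup_eq, mul_zero, zero_add]

theorem limsup_mul_le_of_le_add {T : ℝ≥0∞} (hT : T ≠ ∞)
    (hF : Tendsto (fun t => ENNReal.ofReal t * G (Real.exp t)) atTop (𝓝 s))
    (hH : Tendsto (fun x => ENNReal.ofReal x * H x) atTop (𝓝 0))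
    (hR : ∀ t ε, R t ≤ H (Real.exp (ε * t)) + T * G (Real.exp ((1 - ε) * t))) :
    limsup (fun t => ENNReal.ofReal t * R t) atTop ≤ s * T := by
  have hlim := tendsto_ofReal_mul_nhdsGT_zero (g := fun ε => (1 - ε)⁻¹) (a := s * T)
    (by fun_prop (disch := norm_num)) (by simp)
  simp only [sub_zero, inv_one, ENNReal.ofReal_one, one_mul] at hlim
  exact ge_of_tendsto hlim (mem_of_superset (Ioo_mem_nhdsGT one_pos) fun ε hε =>
    limsup_mul_le_ofReal_inv_mul hε.1 hε.2 hT hF hH (hR · ε))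

theorem ofReal_inv_mul_le_add (hG : Antitone G) {a r h T₂ : ℝ≥0∞} {c ε t : ℝ} {N : ℕ}
    (hc : 0 ≤ c) (hε : 0 < ε) (hN_ge : ε * t ≤ N) (hN_le : (N : ℝ) ≤ 2 * ε * t)
    (hR : a * G (Real.exp (t + N * c)) ≤
      r + h + N * T₂ * (G (Real.exp (t + N * c)) * G (Real.exp (t + N * c)))) :
    ENNReal.ofReal (1 + 2 * ε * c)⁻¹ *
        (ENNReal.ofReal (t + N * c) * G (Real.exp (t + N * c))) * a ≤
      ENNReal.ofReal t * r + (ENNReal.ofReal ε⁻¹ * (ENNReal.ofReal N * h) +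
        ENNReal.ofReal (2 * ε) *
          (T₂ * (ENNReal.ofReal t * G (Real.exp t) * (ENNReal.ofReal t * G (Real.exp t))))) := by
  have ht : 0 ≤ t := by nlinarith [(Nat.cast_nonneg N : (0 : ℝ) ≤ N)]
  have hu_le : ENNReal.ofReal (1 + 2 * ε * c)⁻¹ * ENNReal.ofReal (t + N * c) ≤
      ENNReal.ofReal t := by
    rw [← ENNReal.ofReal_mul (by positivity)]
    refine ENNReal.ofReal_le_ofReal ((inv_mul_le_iff₀ (by positivity)).mpr ?_)
    nlinarith [mul_le_mul_of_nonneg_right hN_le hc]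
  have ht_le : ENNReal.ofReal t ≤ ENNReal.ofReal ε⁻¹ * ENNReal.ofReal N := by
    rw [← ENNReal.ofReal_mul (by positivity)]
    exact ENNReal.ofReal_le_ofReal ((le_inv_mul_iff₀ hε).mpr hN_ge)
  have hN_le' : (N : ℝ≥0∞) ≤ ENNReal.ofReal (2 * ε) * ENNReal.ofReal t := by
    rw [← ENNReal.ofReal_mul (by positivity), ← ENNReal.ofReal_natCast]
    exact ENNReal.ofReal_le_ofReal hN_le
  have hp : G (Real.exp (t + N * c)) ≤ G (Real.exp t) :=
    hG (Real.exp_le_exp.mpr (le_add_of_nonneg_right (by positivity)))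
  calc _ = ENNReal.ofReal (1 + 2 * ε * c)⁻¹ * ENNReal.ofReal (t + N * c) *
          (a * G (Real.exp (t + N * c))) := by ring
    _ ≤ ENNReal.ofReal t *
          (r + h + N * T₂ * (G (Real.exp (t + N * c)) * G (Real.exp (t + N * c)))) := by
        gcongr
    _ = ENNReal.ofReal t * r + (ENNReal.ofReal t * h + ENNReal.ofReal t *
          (N * T₂ * (G (Real.exp (t + N * c)) * G (Real.exp (t + N * c))))) := by ring
    _ ≤ _ := by
        refine add_le_add_right (add_le_add ?_ ?_) _
        · calc _ ≤ ENNReal.ofReal ε⁻¹ * ENNReal.ofReal N * h := by gcongr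
            _ = _ := mul_assoc _ _ _
        · calc _ ≤ ENNReal.ofReal t * (ENNReal.ofReal (2 * ε) * ENNReal.ofReal t * T₂ *
                (G (Real.exp t) * G (Real.exp t))) := by gcongr
            _ = _ := by ring

theorem le_liminf_mul_add_of_le_add {S : ℕ → ℝ≥0∞} {T₁ T₂ : ℝ≥0∞} {c ε : ℝ} (hc : 0 ≤ c)
    (hε : 0 < ε) (hG : Antitone G)
    (hF : Tendsto (fun t => ENNReal.ofReal t * G (Real.exp t)) atTop (𝓝 s))
    (hH : Tendsto (fun x => ENNReal.ofReal x * H x) atTop (𝓝 0))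
    (hS : Tendsto S atTop (𝓝 T₁)) (hT₁ : T₁ ≠ ∞) (hT₂ : T₂ ≠ ∞)
    (hR : ∀ t (N : ℕ), S N * G (Real.exp (t + N * c)) ≤
      R t + H N + N * T₂ * (G (Real.exp (t + N * c)) * G (Real.exp (t + N * c)))) :
    ENNReal.ofReal (1 + 2 * ε * c)⁻¹ * (s * T₁) ≤
      liminf (fun t => ENNReal.ofReal t * R t) atTop + ENNReal.ofReal (2 * ε) * (T₂ * (s * s)) := by
  rcases eq_or_ne T₁ 0 with rfl | hT₁0
  · simp
  have hs : s ≠ 0 ∨ s ≠ ∞ := by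
    rcases eq_or_ne s 0 with rfl | h
    exacts [Or.inr ENNReal.zero_ne_top, Or.inl h]
  set N : ℝ → ℕ := fun t => ⌈ε * t⌉₊
  have hN : Tendsto N atTop atTop := tendsto_nat_ceil_atTop.comp (tendsto_id.const_mul_atTop hε)
  have hu : Tendsto (fun t => t + N t * c) atTop atTop :=
    tendsto_atTop_mono (fun t => le_add_of_nonneg_right (by positivity)) tendsto_id
  refine le_liminf_add_of_eventually_le_add
    (g := fun t => ENNReal.ofReal (1 + 2 * ε * c)⁻¹ *
      (ENNReal.ofReal (t + N t * c) * G (Real.exp (t + N t * c))) * S (N t))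
    (h := fun t => ENNReal.ofReal ε⁻¹ * (ENNReal.ofReal (N t) * H (N t)) + ENNReal.ofReal (2 * ε) *
      (T₂ * (ENNReal.ofReal t * G (Real.exp t) * (ENNReal.ofReal t * G (Real.exp t))))) ?_ ?_ ?_
  · rw [← mul_assoc]
    exact ENNReal.Tendsto.mul (ENNReal.Tendsto.const_mul (hF.comp hu)
      (Or.inr ENNReal.ofReal_ne_top)) (Or.inr hT₁) (hS.comp hN) (Or.inl hT₁0)
  · have herr := ENNReal.Tendsto.const_mul (a := ENNReal.ofReal ε⁻¹)
      (hH.comp (tendsto_natCast_atTop_atTop.comp hN)) (Or.inr ENNReal.ofReal_ne_top)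
    rw [mul_zero] at herr
    simpa only [zero_add, Function.comp_def] using herr.add
      (ENNReal.Tendsto.const_mul (a := ENNReal.ofReal (2 * ε))
        (ENNReal.Tendsto.const_mul (ENNReal.Tendsto.mul hF hs hF hs) (Or.inr hT₂))
        (Or.inr ENNReal.ofReal_ne_top))
  · filter_upwards [eventually_ge_atTop ε⁻¹] with t ht
    have hεt : 1 ≤ ε * t := by rwa [inv_le_iff_one_le_mul₀' hε] at ht
    exact ofReal_inv_mul_le_add hG hc hε (Nat.le_ceil _)
      (by linarith [Nat.ceil_lt_add_one (by linarith : 0 ≤ ε * t)]) (hR t (N t))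

theorem le_liminf_mul_of_le_add {S : ℕ → ℝ≥0∞} {T₁ T₂ : ℝ≥0∞} {c : ℝ} (hc : 0 ≤ c)
    (hG : Antitone G) (hF : Tendsto (fun t => ENNReal.ofReal t * G (Real.exp t)) atTop (𝓝 s))
    (hH : Tendsto (fun x => ENNReal.ofReal x * H x) atTop (𝓝 0))
    (hS : Tendsto S atTop (𝓝 T₁)) (hT₁ : T₁ ≠ ∞) (hT₂ : T₂ ≠ ∞) (hT₂s : T₂ * (s * s) ≠ ∞)
    (hR : ∀ t (N : ℕ), S N * G (Real.exp (t + N * c)) ≤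
      R t + H N + N * T₂ * (G (Real.exp (t + N * c)) * G (Real.exp (t + N * c)))) :
    s * T₁ ≤ liminf (fun t => ENNReal.ofReal t * R t) atTop := by
  have hlower := tendsto_ofReal_mul_nhdsGT_zero (g := fun ε => (1 + 2 * ε * c)⁻¹) (a := s * T₁)
    (by fun_prop (disch := norm_num)) (by simp)
  have hupper := (tendsto_ofReal_mul_nhdsGT_zero (g := fun ε => 2 * ε) (by fun_prop)
    (Or.inr hT₂s)).const_add (liminf (fun t => ENNReal.ofReal t * R t) atTop)
  simp only [mul_zero, zero_mul, add_zero, inv_one, ENNReal.ofReal_zero, ENNReal.ofReal_one,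
    one_mul] at hlower hupper
  exact le_of_tendsto_of_tendsto hlower hupper (eventually_mem_nhdsWithin.mono fun ε hε =>
    le_liminf_mul_add_of_le_add hc hε hG hF hH hS hT₁ hT₂ hR)

end Asymptotics

section DiscountedSum

variable {γ : ℝ} {q : ℕ → ℝ} {n : ℕ}

theorem sum_Icc_pow_mul_le_mul (hγ0 : 0 ≤ γ) (hγ1 : γ ≤ 1) (hq0 : ∀ k, 0 ≤ q k) {M : ℝ}
    (hq : ∀ k ∈ Finset.Icc 1 n, q k ≤ M) : ∑ k ∈ Finset.Icc 1 n, γ ^ (n - k) * q k ≤ n * M := by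
  calc ∑ k ∈ Finset.Icc 1 n, γ ^ (n - k) * q k ≤ ∑ k ∈ Finset.Icc 1 n, M :=
        sum_le_sum fun k hk => (mul_le_of_le_one_left (hq0 k) (pow_le_one₀ hγ0 hγ1)).trans (hq k hk)
    _ = n * M := by simp

theorem pow_mul_le_sum_Icc_pow_mul (hγ0 : 0 ≤ γ) (hγ1 : γ ≤ 1) (hq0 : ∀ k, 0 ≤ q k) {k N : ℕ}
    (hk : k ∈ Finset.Icc 1 n) (hn : n ≤ N) :
    γ ^ N * q k ≤ ∑ k ∈ Finset.Icc 1 n, γ ^ (n - k) * q k :=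
  calc γ ^ N * q k ≤ γ ^ (n - k) * q k :=
        mul_le_mul_of_nonneg_right (pow_le_pow_of_le_one hγ0 hγ1 (by omega)) (hq0 k)
    _ ≤ _ := single_le_sum (f := fun k => γ ^ (n - k) * q k)
        (fun k _ => mul_nonneg (pow_nonneg hγ0 _) (hq0 k)) hk

variable {Ω : Type*} {Q : ℕ → Ω → ℝ} {σ : Ω → ℕ} {Qγ : Ω → ℝ}

theorem mul_lt_subset_union (hγ0 : 0 ≤ γ) (hγ1 : γ ≤ 1) (hQ0 : ∀ n ω, 0 ≤ Q n ω)
    (hQγ : ∀ ω, Qγ ω = ∑ k ∈ Finset.Icc 1 (σ ω), γ ^ (σ ω - k) * Q k ω) (m : ℝ) {x : ℝ}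
    (hx : 0 ≤ x) :
    {ω | m * x < Qγ ω} ⊆ {ω | m < σ ω} ∪ ⋃ j : ℕ, {ω | j < σ ω} ∩ {ω | x < Q (j + 1) ω} := by
  intro ω hω
  by_contra hnot
  simp only [mem_union, mem_ofPred_eq, mem_iUnion, mem_inter_iff, not_or, not_exists, not_and,
    not_lt] at hnot
  obtain ⟨hσm, hQx⟩ := hnot
  have hbound : Qγ ω ≤ σ ω * x := by
    rw [hQγ]
    refine sum_Icc_pow_mul_le_mul hγ0 hγ1 (hQ0 · ω) fun k hk => ?_
    obtain ⟨hk1, hkσ⟩ := Finset.mem_Icc.mp hk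
    simpa [Nat.sub_add_cancel hk1] using hQx (k - 1) (by omega)
  exact hω.not_ge (hbound.trans (mul_le_mul_of_nonneg_right hσm hx))

theorem inter_lt_subset_union (hγ0 : 0 < γ) (hγ1 : γ ≤ 1) (hQ0 : ∀ n ω, 0 ≤ Q n ω)
    (hQγ : ∀ ω, Qγ ω = ∑ k ∈ Finset.Icc 1 (σ ω), γ ^ (σ ω - k) * Q k ω) (j N : ℕ) (y : ℝ) :
    {ω | j < σ ω} ∩ {ω | y < Q (j + 1) ω} ⊆ {ω | γ ^ N * y < Qγ ω} ∪ {ω | N < σ ω} := by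
  rintro ω ⟨hjσ, hy⟩
  rcases lt_or_ge N (σ ω) with hNσ | hσN
  · exact Or.inr hNσ
  refine Or.inl ?_
  calc γ ^ N * y < γ ^ N * Q (j + 1) ω := mul_lt_mul_of_pos_left hy (pow_pos hγ0 N)
    _ ≤ Qγ ω := hQγ ω ▸ pow_mul_le_sum_Icc_pow_mul hγ0.le hγ1 (hQ0 · ω)
        (Finset.mem_Icc.mpr ⟨by omega, hjσ⟩) hσN

end DiscountedSum

section StoppedSum

variable {Ω : Type*} [MeasurableSpace Ω] {μ : Measure Ω} {Q : ℕ → Ω → ℝ}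
  {hQsm : ∀ n, StronglyMeasurable (Q n)} {σ : Ω → ℕ} {γ : ℝ} {Qγ : Ω → ℝ}

theorem measure_inter_lt_succ_eq_mul (hindep : iIndepFun Q μ)
    (hident : ∀ n, IdentDistrib (Q n) (Q 1) μ μ) {j : ℕ} {B : Set Ω}
    (hB : MeasurableSet[Filtration.natural Q hQsm j] B) (x : ℝ) :
    μ (B ∩ {ω | x < Q (j + 1) ω}) = μ B * μ {ω | x < Q 1 ω} := by
  have hQx : MeasurableSet[MeasurableSpace.comap (Q (j + 1)) inferInstance]
      {ω | x < Q (j + 1) ω} := ⟨Ioi x, measurableSet_Ioi, rfl⟩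
  rw [((hindep.indep_comap_natural_of_lt hQsm (lt_add_one j)).symm.indepSet_of_measurableSet hB
    hQx).measure_inter_eq_mul]
  congr 1
  exact (hident (j + 1)).measure_mem_eq measurableSet_Ioi

theorem measurableSet_lt_of_isStoppingTime
    (hσ : IsStoppingTime (Filtration.natural Q hQsm) (fun ω => (σ ω : WithTop ℕ))) (j : ℕ) :
    MeasurableSet[Filtration.natural Q hQsm j] {ω | j < σ ω} := by
  simpa using hσ.measurableSet_gt j

theorem measure_lt_inter_lt_eq_mul (hindep : iIndepFun Q μ)
    (hident : ∀ n, IdentDistrib (Q n) (Q 1) μ μ)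
    (hσ : IsStoppingTime (Filtration.natural Q hQsm) (fun ω => (σ ω : WithTop ℕ))) (j : ℕ)
    (x : ℝ) :
    μ ({ω | j < σ ω} ∩ {ω | x < Q (j + 1) ω}) = μ {ω | j < σ ω} * μ {ω | x < Q 1 ω} :=
  measure_inter_lt_succ_eq_mul hindep hident (measurableSet_lt_of_isStoppingTime hσ j) x

theorem measure_inter_le_mul (hindep : iIndepFun Q μ)
    (hident : ∀ n, IdentDistrib (Q n) (Q 1) μ μ)
    (hσ : IsStoppingTime (Filtration.natural Q hQsm) (fun ω => (σ ω : WithTop ℕ))) {i j : ℕ}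
    (hij : i < j) (x : ℝ) :
    μ (({ω | i < σ ω} ∩ {ω | x < Q (i + 1) ω}) ∩ ({ω | j < σ ω} ∩ {ω | x < Q (j + 1) ω})) ≤
      μ {ω | i < σ ω} * μ {ω | x < Q 1 ω} * μ {ω | x < Q 1 ω} := by
  have hB : MeasurableSet[Filtration.natural Q hQsm j]
      ({ω | i < σ ω} ∩ {ω | x < Q (i + 1) ω} ∩ {ω | j < σ ω}) := by
    refine .inter (.inter ?_ ?_) (measurableSet_lt_of_isStoppingTime hσ j)
    · exact (Filtration.natural Q hQsm).mono hij.le _ (measurableSet_lt_of_isStoppingTime hσ i)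
    · exact ((Filtration.stronglyAdapted_natural hQsm (i + 1)).measurable.mono
        ((Filtration.natural Q hQsm).mono hij) le_rfl) measurableSet_Ioi
  rw [← inter_assoc, measure_inter_lt_succ_eq_mul hindep hident hB,
    ← measure_lt_inter_lt_eq_mul hindep hident hσ i]
  gcongr ?_ * _
  exact measure_mono inter_subset_left

theorem measure_mul_lt_le (hindep : iIndepFun Q μ)
    (hident : ∀ n, IdentDistrib (Q n) (Q 1) μ μ)
    (hσ : IsStoppingTime (Filtration.natural Q hQsm) (fun ω => (σ ω : WithTop ℕ)))
    (hγ0 : 0 ≤ γ) (hγ1 : γ ≤ 1) (hQ0 : ∀ n ω, 0 ≤ Q n ω)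
    (hQγ : ∀ ω, Qγ ω = ∑ k ∈ Finset.Icc 1 (σ ω), γ ^ (σ ω - k) * Q k ω) (m : ℝ) {x : ℝ}
    (hx : 0 ≤ x) :
    μ {ω | m * x < Qγ ω} ≤
      μ {ω | m < σ ω} + (∑' j : ℕ, μ {ω | j < σ ω}) * μ {ω | x < Q 1 ω} :=
  calc μ {ω | m * x < Qγ ω}
      ≤ μ {ω | m < σ ω} + ∑' j : ℕ, μ ({ω | j < σ ω} ∩ {ω | x < Q (j + 1) ω}) :=
        (measure_mono (mul_lt_subset_union hγ0 hγ1 hQ0 hQγ m hx)).trans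
          ((measure_union_le _ _).trans (by gcongr; exact measure_iUnion_le _))
    _ = μ {ω | m < σ ω} + (∑' j : ℕ, μ {ω | j < σ ω}) * μ {ω | x < Q 1 ω} := by
        simp_rw [measure_lt_inter_lt_eq_mul hindep hident hσ, ENNReal.tsum_mul_right]

theorem sum_measure_lt_mul_le (hindep : iIndepFun Q μ)
    (hident : ∀ n, IdentDistrib (Q n) (Q 1) μ μ)
    (hσ : IsStoppingTime (Filtration.natural Q hQsm) (fun ω => (σ ω : WithTop ℕ)))
    (hγ0 : 0 < γ) (hγ1 : γ ≤ 1) (hQ0 : ∀ n ω, 0 ≤ Q n ω)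
    (hQγ : ∀ ω, Qγ ω = ∑ k ∈ Finset.Icc 1 (σ ω), γ ^ (σ ω - k) * Q k ω) (N : ℕ) (y : ℝ) :
    (∑ j ∈ range N, μ {ω | j < σ ω}) * μ {ω | y < Q 1 ω} ≤
      μ {ω | γ ^ N * y < Qγ ω} + μ {ω | N < σ ω} +
        N * (∑' j : ℕ, μ {ω | j < σ ω}) * (μ {ω | y < Q 1 ω} * μ {ω | y < Q 1 ω}) := by
  set A : ℕ → Set Ω := fun j => {ω | j < σ ω} ∩ {ω | y < Q (j + 1) ω}
  have hA : ∀ j, MeasurableSet (A j) := fun j =>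
    ((Filtration.natural Q hQsm).le j _ (measurableSet_lt_of_isStoppingTime hσ j)).inter
      ((hQsm (j + 1)).measurable measurableSet_Ioi)
  have hpairs : ∀ k, ∑ j ∈ range k, μ (A j ∩ A k) ≤
      (∑' j : ℕ, μ {ω | j < σ ω}) * (μ {ω | y < Q 1 ω} * μ {ω | y < Q 1 ω}) := fun k =>
    calc ∑ j ∈ range k, μ (A j ∩ A k)
        ≤ ∑ j ∈ range k, μ {ω | j < σ ω} * (μ {ω | y < Q 1 ω} * μ {ω | y < Q 1 ω}) :=
          sum_le_sum fun j hj => (measure_inter_le_mul hindep hident hσ (mem_range.mp hj) y).trans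
            (mul_assoc _ _ _).le
      _ ≤ _ := by rw [← sum_mul]; gcongr; exact ENNReal.sum_le_tsum _
  calc (∑ j ∈ range N, μ {ω | j < σ ω}) * μ {ω | y < Q 1 ω} = ∑ j ∈ range N, μ (A j) := by
        rw [sum_mul]
        exact sum_congr rfl fun j _ => (measure_lt_inter_lt_eq_mul hindep hident hσ j y).symm
    _ ≤ μ (⋃ j ∈ range N, A j) + ∑ k ∈ range N, ∑ j ∈ range k, μ (A j ∩ A k) :=
        sum_measure_le_measure_biUnion_add_sum_measure_inter μ hA N
    _ ≤ _ := by
        refine add_le_add ((measure_mono (iUnion₂_subset fun j _ =>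
          inter_lt_subset_union hγ0 hγ1 hQ0 hQγ j N y)).trans (measure_union_le _ _)) ?_
        calc _ ≤ ∑ _k ∈ range N, (∑' j : ℕ, μ {ω | j < σ ω}) *
              (μ {ω | y < Q 1 ω} * μ {ω | y < Q 1 ω}) := sum_le_sum fun k _ => hpairs k
          _ = _ := by rw [sum_const, card_range, nsmul_eq_mul, mul_assoc]

theorem measure_lt_le_add (hσ1 : ∀ ω, 1 ≤ σ ω) (hγ0 : 0 < γ) (hγ1 : γ ≤ 1)
    (hQ0 : ∀ n ω, 0 ≤ Q n ω)
    (hQγ : ∀ ω, Qγ ω = ∑ k ∈ Finset.Icc 1 (σ ω), γ ^ (σ ω - k) * Q k ω) (N : ℕ) (y : ℝ) :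
    μ {ω | y < Q 1 ω} ≤ μ {ω | γ ^ N * y < Qγ ω} + μ {ω | N < σ ω} :=
  (measure_mono fun ω hω => inter_lt_subset_union hγ0 hγ1 hQ0 hQγ 0 N y ⟨hσ1 ω, hω⟩).trans
    (measure_union_le _ _)

end StoppedSum

theorem stmt_13_general {Ω : Type*} [MeasureSpace Ω]
    (γ : ℝ) (hγ : γ ∈ Set.Ioo (0 : ℝ) 1)
    (Q : ℕ → Ω → ℝ) (hQsm : ∀ n, StronglyMeasurable (Q n)) (hQ0 : ∀ n ω, 0 ≤ Q n ω)
    (hindep : iIndepFun Q ℙ)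
    (hident : ∀ n, IdentDistrib (Q n) (Q 1) ℙ ℙ)
    (σ : Ω → ℕ) (hσ : IsStoppingTime (Filtration.natural Q hQsm) (fun ω => (σ ω : WithTop ℕ)))
    (hσ1 : ∀ ω, 1 ≤ σ ω) (hσint : Integrable (fun ω => (σ ω : ℝ)))
    (Qγ : Ω → ℝ) (hQγ : ∀ ω, Qγ ω = ∑ k ∈ Finset.Icc 1 (σ ω), γ ^ (σ ω - k) * Q k ω)
    (s : ℝ≥0∞)
    (htail : Tendsto (fun t : ℝ => ENNReal.ofReal t * ℙ {ω | t < Real.log (Q 1 ω)})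
      atTop (nhds s)) :
    Tendsto (fun t : ℝ => ENNReal.ofReal t * ℙ {ω | t < Real.log (Qγ ω)})
      atTop (nhds (s * ENNReal.ofReal (∫ ω, (σ ω : ℝ)))) := by
  obtain ⟨hγ0, hγ1⟩ := hγ
  set T := ∑' j : ℕ, ℙ {ω | j < σ ω}
  have hT : ENNReal.ofReal (∫ ω, (σ ω : ℝ)) = T := by
    rw [ofReal_integral_eq_lintegral_ofReal hσint (ae_of_all _ fun _ => Nat.cast_nonneg _)]
    simpa using lintegral_natCast_eq_tsum_measure_lt ℙ (measurable_of_isStoppingTime hσ)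
  have hTtop : T ≠ ∞ := hT ▸ ENNReal.ofReal_ne_top
  have hF := (tendsto_mul_measure_lt_log_iff (hQ0 1)).mp htail
  have hH : Tendsto (fun x => ENNReal.ofReal x * ℙ {ω | x < σ ω}) atTop (𝓝 0) :=
    tendsto_mul_measure_lt_of_integrable
      (measurable_from_nat.comp (measurable_of_isStoppingTime hσ)) hσint
  have hG : Antitone fun y => ℙ {ω | y < Q 1 ω} := fun x y hxy =>
    measure_mono fun ω hω => hxy.trans_lt hω
  have hc : 0 ≤ Real.log γ⁻¹ := Real.log_nonneg ((one_le_inv₀ hγ0).mpr hγ1.le)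
  rw [hT, tendsto_mul_measure_lt_log_iff fun ω => hQγ ω ▸
    sum_nonneg fun k _ => mul_nonneg (pow_nonneg hγ0.le _) (hQ0 k ω)]
  refine tendsto_of_le_liminf_of_limsup_le ?_ <| limsup_mul_le_of_le_add
    (G := fun y => ℙ {ω | y < Q 1 ω}) hTtop hF hH fun t ε => by
      simpa [← Real.exp_add, ← add_mul] using measure_mul_lt_le hindep hident hσ hγ0.le hγ1.le
        hQ0 hQγ (Real.exp (ε * t)) (Real.exp_pos ((1 - ε) * t)).le
  rcases eq_or_ne s ∞ with rfl | hs
  -- For `s = ∞` the pairwise Bonferroni terms are of no use; the summand `k = 1` alone suffices.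
  · refine (le_top.trans_eq (mul_one ∞).symm).trans <| le_liminf_mul_of_le_add (S := fun _ => 1)
      (T₂ := 0) hc hG hF hH tendsto_const_nhds ENNReal.one_ne_top ENNReal.zero_ne_top (by simp)
      fun t N => ?_
    simpa only [one_mul, mul_zero, zero_mul, add_zero, Nat.cast_lt,
      pow_mul_exp_add_mul_log_inv hγ0] using
      measure_lt_le_add (μ := ℙ) hσ1 hγ0 hγ1.le hQ0 hQγ N (Real.exp (t + N * Real.log γ⁻¹))
  · refine le_liminf_mul_of_le_add hc hG hF hH (ENNReal.tendsto_nat_tsum _) hTtop hTtop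
      (ENNReal.mul_ne_top hTtop (ENNReal.mul_ne_top hs hs)) fun t N => ?_
    simpa only [Nat.cast_lt, pow_mul_exp_add_mul_log_inv hγ0] using
      sum_measure_lt_mul_le hindep hident hσ hγ0 hγ1.le hQ0 hQγ N (Real.exp (t + N * Real.log γ⁻¹))

theorem stmt_13 {Ω : Type*} [MeasureSpace Ω] [IsProbabilityMeasure (ℙ : Measure Ω)]
    (γ : ℝ) (hγ : γ ∈ Set.Ioo (0 : ℝ) 1)
    (Q : ℕ → Ω → ℝ) (hQsm : ∀ n, StronglyMeasurable (Q n)) (hQ0 : ∀ n ω, 0 ≤ Q n ω)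
    (hindep : iIndepFun Q ℙ)
    (hident : ∀ n, IdentDistrib (Q n) (Q 1) ℙ ℙ)
    (σ : Ω → ℕ) (hσ : IsStoppingTime (Filtration.natural Q hQsm) (fun ω => (σ ω : WithTop ℕ)))
    (hσ1 : ∀ ω, 1 ≤ σ ω) (hσint : Integrable (fun ω => (σ ω : ℝ)))
    (Qγ : Ω → ℝ) (hQγ : ∀ ω, Qγ ω = ∑ k ∈ Finset.Icc 1 (σ ω), γ ^ (σ ω - k) * Q k ω)
    (s : ℝ≥0∞)
    (htail : Tendsto (fun t : ℝ => ENNReal.ofReal t * ℙ {ω | t < Real.log (Q 1 ω)})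
      atTop (nhds s)) :
    Tendsto (fun t : ℝ => ENNReal.ofReal t * ℙ {ω | t < Real.log (Qγ ω)})
      atTop (nhds (s * ENNReal.ofReal (∫ ω, (σ ω : ℝ)))) :=
  stmt_13_general γ hγ Q hQsm hQ0 hindep hident σ hσ hσ1 hσint Qγ hQγ s htail
end

section
/- Let α, β ∈ (0,1) with α + β ≥ 1 and x ∈ (0,1). Then there exists a sequence (gₙ)ₙ of finite compositions of the maps f_α(y)=αy and f_β(y)=βy+(1-β) such that x ∈ [gₙ(0), gₙ(1)] and gₙ(1) - gₙ(0) ≤ (α∨β)ⁿ for every n ≥ 1. -/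
theorem stmt_18 (α β : ℝ) (hα : α ∈ Set.Ioo (0 : ℝ) 1) (hβ : β ∈ Set.Ioo (0 : ℝ) 1)
    (hαβ : 1 ≤ α + β) (x : ℝ) (hx : x ∈ Set.Ioo (0 : ℝ) 1)
    (fα fβ : Function.End ℝ)
    (hfα : ∀ y, fα y = α * y) (hfβ : ∀ y, fβ y = β * y + (1 - β)) :
    ∃ g : ℕ → Function.End ℝ, ∀ n : ℕ, 1 ≤ n →
      g n ∈ Subsemigroup.closure {fα, fβ} ∧
      x ∈ Set.Icc (g n 0) (g n 1) ∧
      g n 1 - g n 0 ≤ (max α β) ^ n := by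
  obtain ⟨hα0, hα1⟩ := hα
  obtain ⟨hβ0, hβ1⟩ := hβ
  obtain ⟨hx0, hx1⟩ := hx
  set M := max α β with hM
  have hMα : α ≤ M := le_max_left _ _
  have hMβ : β ≤ M := le_max_right _ _
  have hM0 : 0 < M := lt_of_lt_of_le hα0 hMα
  have hab : 1 - β ≤ α := by linarith
  set Q : ℕ → Function.End ℝ → Prop := fun k g =>
    g ∈ Subsemigroup.closure {fα, fβ} ∧ (∀ y, g y = (g 1 - g 0) * y + g 0) ∧
      0 < g 1 - g 0 ∧ x ∈ Set.Icc (g 0) (g 1) ∧ g 1 - g 0 ≤ M ^ (k + 1) with hQ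
  have hfαmem : fα ∈ ({fα, fβ} : Set (Function.End ℝ)) := Set.mem_insert _ _
  have hfβmem : fβ ∈ ({fα, fβ} : Set (Function.End ℝ)) :=
    Set.mem_insert_of_mem _ rfl
  have base : ∃ g, Q 0 g := by
    by_cases h : x ≤ α
    · refine ⟨fα, Subsemigroup.subset_closure hfαmem, ?_, ?_, ?_, ?_⟩
      · intro y; simp only [hfα]; ring
      · simp only [hfα]; nlinarith
      · constructor <;> simp only [hfα] <;> nlinarith
      · simp only [hfα]; norm_num; linarith [hMα]
    · push_neg at h
      refine ⟨fβ, Subsemigroup.subset_closure hfβmem, ?_, ?_, ?_, ?_⟩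
      · intro y; simp only [hfβ]; ring
      · simp only [hfβ]; nlinarith
      · constructor <;> simp only [hfβ] <;> nlinarith
      · simp only [hfβ]; norm_num; linarith [hMβ]
  have step : ∀ k g, Q k g → ∃ g', Q (k + 1) g' := by
    rintro k g ⟨hcl, haff, hpos, ⟨hxl, hxu⟩, hlen⟩
    set a := g 1 - g 0 with ha
    set b := g 0 with hb
    have hpow : M ^ (k + 1 + 1) = M * M ^ (k + 1) := by ring
    by_cases h : x ≤ α * a + b
    · refine ⟨g * fα, Subsemigroup.mul_mem _ hcl
        (Subsemigroup.subset_closure hfαmem), ?_, ?_, ?_, ?_⟩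
      · intro y
        show g (fα y) = (g (fα 1) - g (fα 0)) * y + g (fα 0)
        rw [hfα, hfα, hfα, haff (α * y), haff (α * 1), haff (α * 0)]; ring
      · show (0:ℝ) < g (fα 1) - g (fα 0)
        rw [hfα, hfα, haff (α * 1), haff (α * 0)]; nlinarith
      · constructor
        · show g (fα 0) ≤ x
          rw [hfα, haff (α * 0)]
          calc (g 1 - g 0) * (α * 0) + g 0 = b := by rw [hb]; ring
            _ ≤ x := hxl
        · show x ≤ g (fα 1)
          rw [hfα, haff (α * 1)]
          calc x ≤ α * a + b := h
            _ = (g 1 - g 0) * (α * 1) + g 0 := by rw [ha, hb]; ring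
      · show g (fα 1) - g (fα 0) ≤ M ^ (k + 1 + 1)
        rw [hfα, hfα, haff (α * 1), haff (α * 0), hpow]
        have : (g 1 - g 0) * (α * 1) + g 0 - ((g 1 - g 0) * (α * 0) + g 0)
            = α * a := by rw [ha]; ring
        rw [this]
        nlinarith
    · push_neg at h
      refine ⟨g * fβ, Subsemigroup.mul_mem _ hcl
        (Subsemigroup.subset_closure hfβmem), ?_, ?_, ?_, ?_⟩
      · intro y
        show g (fβ y) = (g (fβ 1) - g (fβ 0)) * y + g (fβ 0)
        rw [hfβ, hfβ, hfβ, haff (β * y + (1 - β)), haff (β * 1 + (1 - β)),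
          haff (β * 0 + (1 - β))]; ring
      · show (0:ℝ) < g (fβ 1) - g (fβ 0)
        rw [hfβ, hfβ, haff (β * 1 + (1 - β)), haff (β * 0 + (1 - β))]; nlinarith
      · constructor
        · show g (fβ 0) ≤ x
          rw [hfβ, haff (β * 0 + (1 - β))]
          have h1 : (g 1 - g 0) * (β * 0 + (1 - β)) + g 0 = (1 - β) * a + b := by
            rw [ha, hb]; ring
          rw [h1]
          nlinarith
        · show x ≤ g (fβ 1)
          rw [hfβ, haff (β * 1 + (1 - β))]
          have h1 : (g 1 - g 0) * (β * 1 + (1 - β)) + g 0 = a + b := by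
            rw [ha, hb]; ring
          rw [h1, ha, hb]
          linarith
      · show g (fβ 1) - g (fβ 0) ≤ M ^ (k + 1 + 1)
        rw [hfβ, hfβ, haff (β * 1 + (1 - β)), haff (β * 0 + (1 - β)), hpow]
        have : (g 1 - g 0) * (β * 1 + (1 - β)) + g 0 -
            ((g 1 - g 0) * (β * 0 + (1 - β)) + g 0) = β * a := by rw [ha]; ring
        rw [this]
        nlinarith
  have hall : ∀ k, ∃ g, Q k g := by
    intro k
    induction k with
    | zero => exact base
    | succ k ih => obtain ⟨g, hg⟩ := ih; exact step k g hg
  choose F hF using hall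
  refine ⟨fun n => F (n - 1), ?_⟩
  intro n hn
  obtain ⟨hcl, _, _, hmem, hlen⟩ := hF (n - 1)
  refine ⟨hcl, hmem, ?_⟩
  show F (n - 1) 1 - F (n - 1) 0 ≤ M ^ n
  rwa [Nat.sub_add_cancel hn] at hlen
end
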